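/- arXiv:1511.01866 — 4 statements merged into one kernel-verified Lean document; each statement's English description precedes it below -/
import Mathlib

section
/- With f_i = Σ_{r≠i} x_{ir} y_r (convention x_{ri} = -x_{ir}) and Φ_{abcd} = x_{ab}x_{cd} - x_{ac}x_{bd} + x_{ad}x_{bc}, for all 1 ≤ i < j < k ≤ n the syzygy identity holds: x_{ij}f_k - x_{ik}f_j + x_{jk}f_i + Σ_{r=1}^{i-1} y_r Φ_{rijk} - Σ_{r=i+1}^{j-1} y_r Φ_{irjk} + Σ_{r=j+1}^{k-1} y_r Φ_{ijrk} - Σ_{r=k+1}^{n} y_r Φ_{ijkr} = 0. -/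
open MvPolynomial Finset

/-- The variable `x_{ab}` of the generic skew-symmetric matrix, with the
convention `x_{ba} = -x_{ab}` and `x_{aa} = 0`. -/
noncomputable def xv (K : Type*) [CommRing K] (a b : ℕ) :
    MvPolynomial ((ℕ × ℕ) ⊕ ℕ) K :=
  if a < b then X (Sum.inl (a, b)) else if b < a then -X (Sum.inl (b, a)) else 0

/-- The variable `y_r`. -/
noncomputable def yv (K : Type*) [CommRing K] (r : ℕ) :
    MvPolynomial ((ℕ × ℕ) ⊕ ℕ) K :=
  X (Sum.inr r)

/-- The Pfaffian `Φ_{abcd} = x_{ab}x_{cd} - x_{ac}x_{bd} + x_{ad}x_{bc}`. -/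
noncomputable def Phi (K : Type*) [CommRing K] (a b c d : ℕ) :
    MvPolynomial ((ℕ × ℕ) ⊕ ℕ) K :=
  xv K a b * xv K c d - xv K a c * xv K b d + xv K a d * xv K b c

/-- `f_i = Σ_{r ≠ i} x_{ir} y_r`, the `i`-th entry of the product of the
generic `n × n` skew-symmetric matrix with the column vector `(y_1, …, y_n)ᵀ`
(the term `r = i` contributes `x_{ii} y_i = 0`). -/
noncomputable def fpoly (K : Type*) [CommRing K] (n i : ℕ) :
    MvPolynomial ((ℕ × ℕ) ⊕ ℕ) K :=
  ∑ r ∈ Finset.Icc 1 n, xv K i r * yv K r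


lemma xv_anti (K : Type*) [CommRing K] (a b : ℕ) : xv K b a = - xv K a b := by
  unfold xv
  rcases lt_trichotomy a b with h | h | h
  · simp [h, h.not_gt]
  · simp [h]
  · simp [h, h.not_gt]

lemma xv_diag (K : Type*) [CommRing K] (a : ℕ) : xv K a a = 0 := by
  simp [xv]

/-- The syzygy `R_{ijk}`: for `1 ≤ i < j < k ≤ n`,
`x_{ij}f_k - x_{ik}f_j + x_{jk}f_i + Σ_{r=1}^{i-1} y_r Φ_{rijk}
- Σ_{r=i+1}^{j-1} y_r Φ_{irjk} + Σ_{r=j+1}^{k-1} y_r Φ_{ijrk}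
- Σ_{r=k+1}^{n} y_r Φ_{ijkr} = 0`. -/
theorem syzygy_R_ijk (K : Type*) [CommRing K] (n i j k : ℕ)
    (h1 : 1 ≤ i) (hij : i < j) (hjk : j < k) (hkn : k ≤ n) :
    xv K i j * fpoly K n k - xv K i k * fpoly K n j + xv K j k * fpoly K n i
      + ∑ r ∈ Finset.Icc 1 (i - 1), yv K r * Phi K r i j k
      - ∑ r ∈ Finset.Icc (i + 1) (j - 1), yv K r * Phi K i r j k
      + ∑ r ∈ Finset.Icc (j + 1) (k - 1), yv K r * Phi K i j r k
      - ∑ r ∈ Finset.Icc (k + 1) n, yv K r * Phi K i j k r = 0 := by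

  set Q : ℕ → MvPolynomial ((ℕ × ℕ) ⊕ ℕ) K := fun r =>
    yv K r * (xv K i j * xv K k r - xv K i k * xv K j r + xv K j k * xv K i r) with hQ
  have hP1 : ∀ r, yv K r * Phi K r i j k = - Q r := by
    intro r
    simp only [hQ, Phi]
    rw [xv_anti K i r, xv_anti K j r, xv_anti K k r]
    ring
  have hP2 : ∀ r, yv K r * Phi K i r j k = Q r := by
    intro r
    simp only [hQ, Phi]
    rw [xv_anti K j r, xv_anti K k r]
    ring
  have hP3 : ∀ r, yv K r * Phi K i j r k = - Q r := by
    intro r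
    simp only [hQ, Phi]
    rw [xv_anti K k r]
    ring
  have hP4 : ∀ r, yv K r * Phi K i j k r = Q r := by
    intro r
    simp only [hQ, Phi]
    ring
  have hf : xv K i j * fpoly K n k - xv K i k * fpoly K n j + xv K j k * fpoly K n i
      = ∑ r ∈ Finset.Icc 1 n, Q r := by
    unfold fpoly
    simp only [Finset.mul_sum, ← Finset.sum_sub_distrib, ← Finset.sum_add_distrib]
    refine Finset.sum_congr rfl fun r _ => ?_
    simp only [hQ]
    ring
  simp only [hP1, hP2, hP3, hP4, hf, Finset.sum_neg_distrib]
  have hQi : Q i = 0 := by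
    simp only [hQ, xv_diag]
    rw [xv_anti K i j, xv_anti K i k]
    ring
  have hQj : Q j = 0 := by
    simp only [hQ, xv_diag]
    rw [xv_anti K j k]
    ring
  have hQk : Q k = 0 := by
    simp only [hQ, xv_diag]
    ring
  set A := Finset.Icc 1 (i - 1)
  set B := Finset.Icc (i + 1) (j - 1)
  set C := Finset.Icc (j + 1) (k - 1)
  set D := Finset.Icc (k + 1) n
  have hd1 : Disjoint A B := by
    rw [Finset.disjoint_left]; intro r hr hr'
    simp only [A, B, Finset.mem_Icc] at hr hr'; omega
  have hd2 : Disjoint (A ∪ B) C := by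
    rw [Finset.disjoint_left]; intro r hr hr'
    simp only [A, B, C, Finset.mem_union, Finset.mem_Icc] at hr hr'; omega
  have hd3 : Disjoint (A ∪ B ∪ C) D := by
    rw [Finset.disjoint_left]; intro r hr hr'
    simp only [A, B, C, D, Finset.mem_union, Finset.mem_Icc] at hr hr'; omega
  have hsub : A ∪ B ∪ C ∪ D ⊆ Finset.Icc 1 n := by
    intro r hr
    simp only [A, B, C, D, Finset.mem_union, Finset.mem_Icc] at hr ⊢; omega
  have hzero : ∀ r ∈ Finset.Icc 1 n, r ∉ A ∪ B ∪ C ∪ D → Q r = 0 := by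
    intro r hr hr'
    simp only [A, B, C, D, Finset.mem_union, Finset.mem_Icc] at hr hr'
    have : r = i ∨ r = j ∨ r = k := by omega
    rcases this with rfl | rfl | rfl
    · exact hQi
    · exact hQj
    · exact hQk
  have hsplit : ∑ r ∈ Finset.Icc 1 n, Q r
      = ∑ r ∈ A, Q r + ∑ r ∈ B, Q r + ∑ r ∈ C, Q r + ∑ r ∈ D, Q r := by
    rw [← Finset.sum_subset hsub hzero, Finset.sum_union hd3, Finset.sum_union hd2,
      Finset.sum_union hd1]
  rw [hsplit]
  ring
end

section
/- For n ≥ 5, the number of maximal faces of the simplicial complex K_n = st(f, A_n * S^0) equals (2/(n-1))·binomial(2(n-2), n-2) + (1/(n-2))·binomial(2(n-3), n-3), where f is the edge {δ_{1(n-1)}, w_1}. -/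
/-- `d` is a diagonal of the `n`-gon whose vertices are labeled by `Fin n` in
cyclic order: a two-element set `{i, j}` of non-adjacent vertices. -/
def IsDiagonal (n : ℕ) (d : Finset (Fin n)) : Prop :=
  ∃ i j : Fin n, i < j ∧ d = {i, j} ∧
    (j : ℕ) ≠ (i : ℕ) + 1 ∧ ¬((i : ℕ) = 0 ∧ (j : ℕ) = n - 1)

/-- Two diagonals of the `n`-gon cross iff they are of the form `δ_{ik}`,
`δ_{jl}` with `i < j < k < l`. -/
def Crosses (n : ℕ) (d₁ d₂ : Finset (Fin n)) : Prop :=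
  ∃ i j k l : Fin n, i < j ∧ j < k ∧ k < l ∧
    ((d₁ = {i, k} ∧ d₂ = {j, l}) ∨ (d₁ = {j, l} ∧ d₂ = {i, k}))

/-- A face of the associahedron complex `𝒜_n`: a set of pairwise non-crossing
diagonals of the `n`-gon. -/
def IsFaceA (n : ℕ) (F : Finset (Finset (Fin n))) : Prop :=
  (∀ d ∈ F, IsDiagonal n d) ∧ ∀ d₁ ∈ F, ∀ d₂ ∈ F, ¬ Crosses n d₁ d₂

/-- The vertex set underlying the complex `𝒦_n`: diagonals of the `n`-gon
(via `Sum.inl`), together with the extra vertices `w₁ = inr 0`, `w₂ = inr 1`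
and the vertex `v = inr 2` introduced by stellar subdivision. -/
abbrev KVert (n : ℕ) := Finset (Fin n) ⊕ Fin 3

/-- The complex `𝒜_n`, with its faces viewed inside `KVert n`. -/
def AComplex (n : ℕ) : Set (Finset (KVert n)) :=
  {F | ∃ G : Finset (Finset (Fin n)), IsFaceA n G ∧ F = G.image Sum.inl}

/-- The complex `S⁰` on the two vertices `w₁ = inr 0`, `w₂ = inr 1`. -/
def SZero (n : ℕ) : Set (Finset (KVert n)) :=
  {∅, {Sum.inr 0}, {Sum.inr 1}}

/-- The join of two complexes. -/
def JoinC {V : Type*} [DecidableEq V] (K L : Set (Finset V)) :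
    Set (Finset V) :=
  {h | ∃ f ∈ K, ∃ g ∈ L, h = f ∪ g}

/-- Stellar subdivision of `K` at the face `f`, with new vertex `v`. -/
def StellarSubdivision {V : Type*} [DecidableEq V] (f : Finset V) (v : V)
    (K : Set (Finset V)) : Set (Finset V) :=
  {g | g ∈ K ∧ ¬ f ⊆ g} ∪ {h | ∃ g ∈ K, ¬ f ⊆ g ∧ f ∪ g ∈ K ∧ h = g ∪ {v}}

/-- The edge `f = {δ_{1(n-1)}, w₁}` of `𝒜_n * S⁰`. -/
def fEdge (n : ℕ) (hn : 5 ≤ n) : Finset (KVert n) :=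
  {Sum.inl {⟨0, by omega⟩, ⟨n - 2, by omega⟩}, Sum.inr 0}

/-- The complex `𝒦_n = st(f, 𝒜_n * S⁰)`, where `f = {δ_{1(n-1)}, w₁}` and the
new vertex of the stellar subdivision is `v = inr 2`. -/
def KComplex (n : ℕ) (hn : 5 ≤ n) : Set (Finset (KVert n)) :=
  StellarSubdivision (fEdge n hn) (Sum.inr 2) (JoinC (AComplex n) (SZero n))


open Finset
namespace NGon



def NDiag (a b : ℕ) (d : Finset ℕ) : Prop :=
  ∃ i j : ℕ, a ≤ i ∧ i < j ∧ j ≤ b ∧ d = {i, j} ∧ j ≠ i + 1 ∧ ¬(i = a ∧ j = b)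

def NCross (d₁ d₂ : Finset ℕ) : Prop :=
  ∃ i j k l : ℕ, i < j ∧ j < k ∧ k < l ∧
    ((d₁ = {i, k} ∧ d₂ = {j, l}) ∨ (d₁ = {j, l} ∧ d₂ = {i, k}))

def NFace (a b : ℕ) (F : Finset (Finset ℕ)) : Prop :=
  (∀ d ∈ F, NDiag a b d) ∧ ∀ d₁ ∈ F, ∀ d₂ ∈ F, ¬ NCross d₁ d₂

def Tri (a b : ℕ) : Set (Finset (Finset ℕ)) :=
  {F | NFace a b F ∧ ∀ G, NFace a b G → F ⊆ G → G = F}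

lemma pair_inj {i j k l : ℕ} (hij : i < j) (hkl : k < l)
    (h : ({i, j} : Finset ℕ) = {k, l}) : i = k ∧ j = l := by
  have h1 : i ∈ ({k, l} : Finset ℕ) := h ▸ (by simp)
  have h2 : j ∈ ({k, l} : Finset ℕ) := h ▸ (by simp)
  have h3 : k ∈ ({i, j} : Finset ℕ) := h ▸ (by simp)
  have h4 : l ∈ ({i, j} : Finset ℕ) := h ▸ (by simp)
  simp only [mem_insert, mem_singleton] at h1 h2 h3 h4
  omega

lemma ncross_pair_iff {i j k l : ℕ} (hij : i < j) (hkl : k < l) :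
    NCross {i, j} {k, l} ↔ (i < k ∧ k < j ∧ j < l) ∨ (k < i ∧ i < l ∧ l < j) := by
  constructor
  · rintro ⟨p, q, r, s, h1, h2, h3, (⟨e1, e2⟩ | ⟨e1, e2⟩)⟩
    · obtain ⟨rfl, rfl⟩ := pair_inj hij (by omega) e1
      obtain ⟨rfl, rfl⟩ := pair_inj hkl (by omega) e2
      omega
    · obtain ⟨rfl, rfl⟩ := pair_inj hij (by omega) e1
      obtain ⟨rfl, rfl⟩ := pair_inj hkl (by omega) e2
      omega
  · rintro (⟨h1, h2, h3⟩ | ⟨h1, h2, h3⟩)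
    · exact ⟨i, k, j, l, h1, h2, h3, Or.inl ⟨rfl, rfl⟩⟩
    · exact ⟨k, i, l, j, h1, h2, h3, Or.inr ⟨rfl, rfl⟩⟩

lemma ncross_symm {d₁ d₂ : Finset ℕ} (h : NCross d₁ d₂) : NCross d₂ d₁ := by
  obtain ⟨i, j, k, l, h1, h2, h3, h4⟩ := h
  rcases h4 with ⟨e1,e2⟩|⟨e1,e2⟩
  · exact ⟨i, j, k, l, h1, h2, h3, Or.inr ⟨e2, e1⟩⟩
  · exact ⟨i, j, k, l, h1, h2, h3, Or.inl ⟨e2, e1⟩⟩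

lemma not_ncross_self {i j : ℕ} (hij : i < j) : ¬ NCross {i, j} {i, j} := by
  rw [ncross_pair_iff hij hij]; omega

/-- diagonals of [a,k] and [k,b] never cross -/
lemma sep_not_cross {a k b : ℕ} {d₁ d₂ : Finset ℕ}
    (h₁ : NDiag a k d₁) (h₂ : NDiag k b d₂) : ¬ NCross d₁ d₂ := by
  obtain ⟨i, j, _, hij, hjk, rfl, _, _⟩ := h₁
  obtain ⟨p, q, hp, hpq, _, rfl, _, _⟩ := h₂
  rw [ncross_pair_iff hij hpq]; omega

lemma edge_ak_not_cross_left {a k : ℕ} (hak : a < k) {d : Finset ℕ}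
    (h : NDiag a k d) : ¬ NCross ({a, k} : Finset ℕ) d := by
  obtain ⟨i, j, hi, hij, hjk, rfl, _, _⟩ := h
  rw [ncross_pair_iff hak hij]; omega

lemma edge_ak_not_cross_right {a k b : ℕ} (hak : a < k) {d : Finset ℕ}
    (h : NDiag k b d) : ¬ NCross ({a, k} : Finset ℕ) d := by
  obtain ⟨i, j, hi, hij, hjk, rfl, _, _⟩ := h
  rw [ncross_pair_iff hak hij]; omega

lemma edge_kb_not_cross_left {a k b : ℕ} (hkb : k < b) {d : Finset ℕ}
    (h : NDiag a k d) : ¬ NCross ({k, b} : Finset ℕ) d := by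
  obtain ⟨i, j, hi, hij, hjk, rfl, _, _⟩ := h
  rw [ncross_pair_iff hkb hij]; omega

lemma edge_kb_not_cross_right {k b : ℕ} (hkb : k < b) {d : Finset ℕ}
    (h : NDiag k b d) : ¬ NCross ({k, b} : Finset ℕ) d := by
  obtain ⟨i, j, hi, hij, hjk, rfl, _, _⟩ := h
  rw [ncross_pair_iff hkb hij]; omega

lemma nface_mono {a b : ℕ} {F G : Finset (Finset ℕ)} (h : NFace a b F) (hGF : G ⊆ F) :
    NFace a b G :=
  ⟨fun d hd => h.1 d (hGF hd), fun d₁ h₁ d₂ h₂ => h.2 d₁ (hGF h₁) d₂ (hGF h₂)⟩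



noncomputable section
open Classical

def glue (a k b : ℕ) (F₁ F₂ : Finset (Finset ℕ)) : Finset (Finset ℕ) :=
  (F₁ ∪ F₂) ∪ ((if k = a + 1 then ∅ else {({a, k} : Finset ℕ)}) ∪
    (if k + 1 = b then ∅ else {({k, b} : Finset ℕ)}))

lemma mem_glue {a k b : ℕ} {F₁ F₂ : Finset (Finset ℕ)} {d : Finset ℕ} :
    d ∈ glue a k b F₁ F₂ ↔ d ∈ F₁ ∨ d ∈ F₂ ∨ (k ≠ a + 1 ∧ d = {a, k}) ∨
      (k + 1 ≠ b ∧ d = {k, b}) := by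
  unfold glue
  split_ifs with h1 h2 h2 <;> simp_all [or_assoc] <;> tauto

/-- a diagonal of the interval polygon `[a,b]` is either a left diagonal,
a right diagonal, the chord `{a,k}`, the chord `{k,b}`, or strictly straddles `k`. -/
lemma diag_cases {a k b : ℕ} (hak : a < k) (hkb : k < b) {d : Finset ℕ}
    (hd : NDiag a b d) :
    NDiag a k d ∨ NDiag k b d ∨ (k ≠ a + 1 ∧ d = {a, k}) ∨ (k + 1 ≠ b ∧ d = {k, b}) ∨
      (∃ i j, a < i ∧ i < k ∧ k < j ∧ j ≤ b ∧ d = {i, j}) ∨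
      (∃ j, k < j ∧ j < b ∧ d = {a, j}) := by
  obtain ⟨i, j, hi, hij, hjb, rfl, hne, hnab⟩ := hd
  by_cases hjk : j ≤ k
  · by_cases hik : i = a ∧ j = k
    · exact Or.inr (Or.inr (Or.inl ⟨by omega, by rw [hik.1, hik.2]⟩))
    · exact Or.inl ⟨i, j, hi, hij, hjk, rfl, hne, hik⟩
  · by_cases hik : k ≤ i
    · by_cases hkb' : i = k ∧ j = b
      · exact Or.inr (Or.inr (Or.inr (Or.inl ⟨by omega, by rw [hkb'.1, hkb'.2]⟩)))
      · exact Or.inr (Or.inl ⟨i, j, hik, hij, hjb, rfl, hne, hkb'⟩)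
    · -- i < k < j
      by_cases hia : i = a
      · subst hia
        have hjb' : j < b := by omega
        exact Or.inr (Or.inr (Or.inr (Or.inr (Or.inr ⟨j, by omega, hjb', rfl⟩))))
      · exact Or.inr (Or.inr (Or.inr (Or.inr (Or.inl ⟨i, j, by omega, by omega, by omega, hjb, rfl⟩))))

lemma glue_mem_Tri {a k b : ℕ} (hak : a < k) (hkb : k < b)
    {F₁ F₂ : Finset (Finset ℕ)} (h₁ : F₁ ∈ Tri a k) (h₂ : F₂ ∈ Tri k b) :
    glue a k b F₁ F₂ ∈ Tri a b := by
  obtain ⟨⟨h1d, h1c⟩, h1m⟩ := h₁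
  obtain ⟨⟨h2d, h2c⟩, h2m⟩ := h₂
  have hdiag : ∀ d ∈ glue a k b F₁ F₂, NDiag a b d := by
    intro d hd
    rw [mem_glue] at hd
    rcases hd with hd | hd | ⟨hne, rfl⟩ | ⟨hne, rfl⟩
    · obtain ⟨i, j, hi, hij, hjk, rfl, hne, hnab⟩ := h1d d hd
      exact ⟨i, j, hi, hij, by omega, rfl, hne, by omega⟩
    · obtain ⟨i, j, hi, hij, hjb, rfl, hne, hnab⟩ := h2d d hd
      exact ⟨i, j, by omega, hij, hjb, rfl, hne, by omega⟩
    · exact ⟨a, k, le_rfl, hak, by omega, rfl, by omega, by omega⟩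
    · exact ⟨k, b, by omega, hkb, le_rfl, rfl, by omega, by omega⟩
  have hcross : ∀ d₁ ∈ glue a k b F₁ F₂, ∀ d₂ ∈ glue a k b F₁ F₂, ¬ NCross d₁ d₂ := by
    intro d₁ hd₁ d₂ hd₂
    rw [mem_glue] at hd₁ hd₂
    rcases hd₁ with h | h | ⟨_, rfl⟩ | ⟨_, rfl⟩ <;>
      rcases hd₂ with h' | h' | ⟨_, rfl⟩ | ⟨_, rfl⟩
    · exact h1c _ h _ h'
    · exact sep_not_cross (h1d _ h) (h2d _ h')
    · exact fun hc => edge_ak_not_cross_left hak (h1d _ h) (ncross_symm hc)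
    · exact fun hc => edge_kb_not_cross_left hkb (h1d _ h) (ncross_symm hc)
    · exact fun hc => sep_not_cross (h1d _ h') (h2d _ h) (ncross_symm hc)
    · exact h2c _ h _ h'
    · exact fun hc => edge_ak_not_cross_right hak (h2d _ h) (ncross_symm hc)
    · exact fun hc => edge_kb_not_cross_right hkb (h2d _ h) (ncross_symm hc)
    · exact edge_ak_not_cross_left hak (h1d _ h')
    · exact edge_ak_not_cross_right hak (h2d _ h')
    · exact not_ncross_self hak
    · rw [ncross_pair_iff hak hkb]; omega
    · exact edge_kb_not_cross_left hkb (h1d _ h')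
    · exact edge_kb_not_cross_right hkb (h2d _ h')
    · rw [ncross_pair_iff hkb hak]; omega
    · exact not_ncross_self hkb
  refine ⟨⟨hdiag, hcross⟩, ?_⟩
  intro G hG hsub
  apply Finset.Subset.antisymm _ hsub
  intro d hd
  have hdG : NDiag a b d := hG.1 d hd
  rcases diag_cases hak hkb hdG with hc | hc | hc | hc | hc | hc
  · -- NDiag a k d : use maximality of F₁
    have : F₁ ∪ {d} = F₁ := by
      apply h1m
      · constructor
        · intro e he
          rcases Finset.mem_union.1 he with he | he
          · exact h1d e he
          · rw [Finset.mem_singleton] at he; subst he; exact hc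
        · intro e₁ he₁ e₂ he₂
          have m : ∀ e, e ∈ F₁ ∪ {d} → e ∈ G := by
            intro e he
            rcases Finset.mem_union.1 he with he | he
            · exact hsub (mem_glue.2 (Or.inl he))
            · rw [Finset.mem_singleton] at he; subst he; exact hd
          exact hG.2 e₁ (m _ he₁) e₂ (m _ he₂)
      · exact Finset.subset_union_left
    have : d ∈ F₁ := by
      rw [← this]; simp
    exact mem_glue.2 (Or.inl this)
  · have : F₂ ∪ {d} = F₂ := by
      apply h2m
      · constructor
        · intro e he
          rcases Finset.mem_union.1 he with he | he
          · exact h2d e he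
          · rw [Finset.mem_singleton] at he; subst he; exact hc
        · intro e₁ he₁ e₂ he₂
          have m : ∀ e, e ∈ F₂ ∪ {d} → e ∈ G := by
            intro e he
            rcases Finset.mem_union.1 he with he | he
            · exact hsub (mem_glue.2 (Or.inr (Or.inl he)))
            · rw [Finset.mem_singleton] at he; subst he; exact hd
          exact hG.2 e₁ (m _ he₁) e₂ (m _ he₂)
      · exact Finset.subset_union_left
    have : d ∈ F₂ := by rw [← this]; simp
    exact mem_glue.2 (Or.inr (Or.inl this))
  · exact mem_glue.2 (Or.inr (Or.inr (Or.inl hc)))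
  · exact mem_glue.2 (Or.inr (Or.inr (Or.inr hc)))
  · -- strict straddle with i > a : crosses {a,k}
    exfalso
    obtain ⟨i, j, hai, hik, hkj, hjb, rfl⟩ := hc
    have hkne : k ≠ a + 1 := by omega
    have hakG : ({a, k} : Finset ℕ) ∈ G := hsub (mem_glue.2 (Or.inr (Or.inr (Or.inl ⟨hkne, rfl⟩))))
    have : NCross {a, k} {i, j} := by
      rw [ncross_pair_iff hak (by omega)]; omega
    exact hG.2 _ hakG _ hd this
  · -- d = {a, j}, k < j < b : crosses {k,b}
    exfalso
    obtain ⟨j, hkj, hjb, rfl⟩ := hc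
    have hkne : k + 1 ≠ b := by omega
    have hkbG : ({k, b} : Finset ℕ) ∈ G :=
      hsub (mem_glue.2 (Or.inr (Or.inr (Or.inr ⟨hkne, rfl⟩))))
    have : NCross {k, b} {a, j} := by
      rw [ncross_pair_iff hkb (by omega)]; omega
    exact hG.2 _ hkbG _ hd this


lemma pair_mem_glue_left {a k b m : ℕ} {F₁ F₂ : Finset (Finset ℕ)}
    (h₁ : ∀ d ∈ F₁, NDiag a k d) (h₂ : ∀ d ∈ F₂, NDiag k b d)
    (hak : a < k) (hkb : k < b) (ham : a < m) (hmk : m < k) (hmb : m < b) :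
    ({m, b} : Finset ℕ) ∉ glue a k b F₁ F₂ := by
  intro h
  rcases mem_glue.1 h with h | h | ⟨_, h⟩ | ⟨_, h⟩
  · obtain ⟨i, j, hi, hij, hjk, he, _, _⟩ := h₁ _ h
    have := pair_inj hmb hij he
    omega
  · obtain ⟨i, j, hi, hij, hjb, he, _, _⟩ := h₂ _ h
    have := pair_inj hmb hij he
    omega
  · have := pair_inj hmb hak h
    omega
  · have := pair_inj hmb hkb h
    omega

lemma pair_mem_glue_right {a k b m : ℕ} {F₁ F₂ : Finset (Finset ℕ)}
    (h₁ : ∀ d ∈ F₁, NDiag a k d) (h₂ : ∀ d ∈ F₂, NDiag k b d)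
    (hak : a < k) (hkb : k < b) (ham : a < m) (hkm : k < m) (hmb : m < b) :
    ({a, m} : Finset ℕ) ∉ glue a k b F₁ F₂ := by
  intro h
  rcases mem_glue.1 h with h | h | ⟨_, h⟩ | ⟨_, h⟩
  · obtain ⟨i, j, hi, hij, hjk, he, _, _⟩ := h₁ _ h
    have := pair_inj ham hij he
    omega
  · obtain ⟨i, j, hi, hij, hjb, he, _, _⟩ := h₂ _ h
    have := pair_inj ham hij he
    omega
  · have := pair_inj ham hak h
    omega
  · have := pair_inj ham hkb h
    omega

/-- The apex property that characterizes `k`. -/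
def Apex (a b : ℕ) (F : Finset (Finset ℕ)) (m : ℕ) : Prop :=
  a < m ∧ m < b ∧ (({a, m} : Finset ℕ) ∈ F ∨ m = a + 1) ∧
    (({m, b} : Finset ℕ) ∈ F ∨ m + 1 = b)

lemma apex_glue {a k b : ℕ} (hak : a < k) (hkb : k < b)
    {F₁ F₂ : Finset (Finset ℕ)} :
    Apex a b (glue a k b F₁ F₂) k := by
  refine ⟨hak, hkb, ?_, ?_⟩
  · by_cases h : k = a + 1
    · exact Or.inr h
    · exact Or.inl (mem_glue.2 (Or.inr (Or.inr (Or.inl ⟨h, rfl⟩))))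
  · by_cases h : k + 1 = b
    · exact Or.inr h
    · exact Or.inl (mem_glue.2 (Or.inr (Or.inr (Or.inr ⟨h, rfl⟩))))

lemma apex_unique {a k b : ℕ} (hak : a < k) (hkb : k < b)
    {F₁ F₂ : Finset (Finset ℕ)}
    (h₁ : ∀ d ∈ F₁, NDiag a k d) (h₂ : ∀ d ∈ F₂, NDiag k b d)
    {m : ℕ} (hm : Apex a b (glue a k b F₁ F₂) m) : m = k := by
  obtain ⟨ham, hmb, hams, hmbs⟩ := hm
  by_contra hne
  rcases Nat.lt_or_ge m k with hmk | hkm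
  · rcases hmbs with h | h
    · exact pair_mem_glue_left h₁ h₂ hak hkb ham hmk hmb h
    · omega
  · have hkm : k < m := by omega
    rcases hams with h | h
    · exact pair_mem_glue_right h₁ h₂ hak hkb ham hkm hmb h
    · omega

lemma glue_inj {a k b : ℕ} (hak : a < k) (hkb : k < b)
    {F₁ F₂ G₁ G₂ : Finset (Finset ℕ)}
    (h₁ : ∀ d ∈ F₁, NDiag a k d) (h₂ : ∀ d ∈ F₂, NDiag k b d)
    (g₁ : ∀ d ∈ G₁, NDiag a k d) (g₂ : ∀ d ∈ G₂, NDiag k b d)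
    (h : glue a k b F₁ F₂ = glue a k b G₁ G₂) : F₁ = G₁ ∧ F₂ = G₂ := by
  have key1 : ∀ (H₁ H₂ : Finset (Finset ℕ)), (∀ d ∈ H₁, NDiag a k d) →
      (∀ d ∈ H₂, NDiag k b d) → ∀ d, d ∈ glue a k b H₁ H₂ ∧ NDiag a k d ↔ d ∈ H₁ := by
    intro H₁ H₂ hh₁ hh₂ d
    constructor
    · rintro ⟨hd, i, j, hi, hij, hjk, rfl, hne, hnak⟩
      rcases mem_glue.1 hd with h | h | ⟨_, h⟩ | ⟨_, h⟩
      · exact h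
      · obtain ⟨p, q, hp, hpq, hqb, he, _, _⟩ := hh₂ _ h
        have := pair_inj hij hpq he
        omega
      · have := pair_inj hij hak h
        exact absurd ⟨this.1, this.2⟩ hnak
      · have := pair_inj hij hkb h
        omega
    · intro hd
      exact ⟨mem_glue.2 (Or.inl hd), hh₁ _ hd⟩
  have key2 : ∀ (H₁ H₂ : Finset (Finset ℕ)), (∀ d ∈ H₁, NDiag a k d) →
      (∀ d ∈ H₂, NDiag k b d) → ∀ d, d ∈ glue a k b H₁ H₂ ∧ NDiag k b d ↔ d ∈ H₂ := by
    intro H₁ H₂ hh₁ hh₂ d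
    constructor
    · rintro ⟨hd, i, j, hi, hij, hjb, rfl, hne, hnkb⟩
      rcases mem_glue.1 hd with h | h | ⟨_, h⟩ | ⟨_, h⟩
      · obtain ⟨p, q, hp, hpq, hqk, he, _, _⟩ := hh₁ _ h
        have := pair_inj hij hpq he
        omega
      · exact h
      · have := pair_inj hij hak h
        omega
      · have := pair_inj hij hkb h
        exact absurd ⟨this.1, this.2⟩ hnkb
    · intro hd
      exact ⟨mem_glue.2 (Or.inr (Or.inl hd)), hh₂ _ hd⟩
  constructor
  · ext d
    rw [← key1 F₁ F₂ h₁ h₂ d, ← key1 G₁ G₂ g₁ g₂ d, h]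
  · ext d
    rw [← key2 F₁ F₂ h₁ h₂ d, ← key2 G₁ G₂ g₁ g₂ d, h]

lemma glue_surj {a b : ℕ} (hab : a + 2 ≤ b) {F : Finset (Finset ℕ)}
    (hF : F ∈ Tri a b) :
    ∃ k, a < k ∧ k < b ∧ ∃ F₁ ∈ Tri a k, ∃ F₂ ∈ Tri k b, F = glue a k b F₁ F₂ := by
  obtain ⟨⟨hFd, hFc⟩, hFm⟩ := hF
  -- the set of candidate apexes
  set S : Finset ℕ := (Finset.Ioo a b).filter
    (fun m => ({m, b} : Finset ℕ) ∈ F ∨ m + 1 = b) with hS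
  have hbS : b - 1 ∈ S := by
    simp only [hS, Finset.mem_filter, Finset.mem_Ioo]
    omega
  have hSne : S.Nonempty := ⟨_, hbS⟩
  set k := S.min' hSne with hk
  have hkS : k ∈ S := S.min'_mem hSne
  have hkIoo : a < k ∧ k < b := by
    have := (Finset.mem_filter.1 hkS).1
    exact Finset.mem_Ioo.1 this
  obtain ⟨hak, hkb⟩ := hkIoo
  have hkprop : ({k, b} : Finset ℕ) ∈ F ∨ k + 1 = b := (Finset.mem_filter.1 hkS).2
  have hkmin : ∀ m, a < m → m < b → (({m, b} : Finset ℕ) ∈ F ∨ m + 1 = b) → k ≤ m := by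
    intro m h1 h2 h3
    exact S.min'_le m (Finset.mem_filter.2 ⟨Finset.mem_Ioo.2 ⟨h1, h2⟩, h3⟩)
  -- adding a compatible diagonal to F keeps it a face, so it is in F
  have habsorb : ∀ d, NDiag a b d → (∀ e ∈ F, ¬ NCross d e) → (∀ e ∈ F, ¬ NCross e d) →
      ¬ NCross d d → d ∈ F := by
    intro d hd hc1 hc2 hc3
    have : F ∪ {d} = F := by
      apply hFm
      · constructor
        · intro e he
          rcases Finset.mem_union.1 he with he | he
          · exact hFd e he
          · rw [Finset.mem_singleton] at he; subst he; exact hd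
        · intro e₁ he₁ e₂ he₂
          rcases Finset.mem_union.1 he₁ with hu₁ | hu₁ <;>
            rcases Finset.mem_union.1 he₂ with hu₂ | hu₂
          · exact hFc _ hu₁ _ hu₂
          · rw [Finset.mem_singleton] at hu₂
            rw [hu₂]; exact hc2 _ hu₁
          · rw [Finset.mem_singleton] at hu₁
            rw [hu₁]; exact hc1 _ hu₂
          · rw [Finset.mem_singleton] at hu₁ hu₂
            rw [hu₁, hu₂]; exact hc3
      · exact Finset.subset_union_left
    rw [← this]; simp
  -- claim 1 : {a,k} ∈ F or k = a+1
  have claim1 : ({a, k} : Finset ℕ) ∈ F ∨ k = a + 1 := by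
    by_cases hka : k = a + 1
    · exact Or.inr hka
    · left
      apply habsorb
      · exact ⟨a, k, le_rfl, hak, by omega, rfl, by omega, by omega⟩
      · intro e he hcr
        obtain ⟨i, j, hi, hij, hjb, rfl, hne, hnab⟩ := hFd e he
        rw [ncross_pair_iff hak hij] at hcr
        -- so a < i < k < j ≤ b
        rcases hcr with ⟨h1, h2, h3⟩ | ⟨h1, h2, h3⟩
        · -- i crosses : a<i<k<j
          rcases Nat.lt_or_ge j b with hjb' | hjb'
          · -- j < b : {i,j} with i<k<j<b; but then {k,b} ∈ F crosses it
            have hkbF : ({k, b} : Finset ℕ) ∈ F := by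
              rcases hkprop with h | h
              · exact h
              · omega
            exact hFc _ hkbF _ he (by rw [ncross_pair_iff hkb hij]; omega)
          · -- j = b : {i,b} ∈ F with a<i<k contradicts minimality of k
            have : j = b := by omega
            subst this
            have := hkmin i (by omega) (by omega) (Or.inl he)
            omega
        · omega
      · intro e he hcr
        obtain ⟨i, j, hi, hij, hjb, rfl, hne, hnab⟩ := hFd e he
        rw [ncross_pair_iff hij hak] at hcr
        rcases hcr with ⟨h1, h2, h3⟩ | ⟨h1, h2, h3⟩
        · omega
        · rcases Nat.lt_or_ge j b with hjb' | hjb'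
          · have hkbF : ({k, b} : Finset ℕ) ∈ F := by
              rcases hkprop with h | h
              · exact h
              · omega
            exact hFc _ hkbF _ he (by rw [ncross_pair_iff hkb hij]; omega)
          · have : j = b := by omega
            subst this
            have := hkmin i (by omega) (by omega) (Or.inl he)
            omega
      · exact not_ncross_self hak
  -- every member of F is a left diag, right diag, {a,k} or {k,b}
  have hsplit : ∀ d ∈ F, NDiag a k d ∨ NDiag k b d ∨
      (k ≠ a + 1 ∧ d = {a, k}) ∨ (k + 1 ≠ b ∧ d = {k, b}) := by
    intro d hd
    rcases diag_cases hak hkb (hFd d hd) with h | h | h | h | h | h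
    · exact Or.inl h
    · exact Or.inr (Or.inl h)
    · exact Or.inr (Or.inr (Or.inl h))
    · exact Or.inr (Or.inr (Or.inr h))
    · exfalso
      obtain ⟨i, j, hai, hik, hkj, hjb, rfl⟩ := h
      have hakF : ({a, k} : Finset ℕ) ∈ F := by
        rcases claim1 with h | h
        · exact h
        · omega
      exact hFc _ hakF _ hd (by rw [ncross_pair_iff hak (by omega : i < j)]; omega)
    · exfalso
      obtain ⟨j, hkj, hjb, rfl⟩ := h
      have hkbF : ({k, b} : Finset ℕ) ∈ F := by
        rcases hkprop with h | h
        · exact h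
        · omega
      exact hFc _ hkbF _ hd (by rw [ncross_pair_iff hkb (by omega : a < j)]; omega)
  refine ⟨k, hak, hkb, F.filter (fun d => NDiag a k d), ?_, F.filter (fun d => NDiag k b d), ?_, ?_⟩
  · -- F₁ ∈ Tri a k
    refine ⟨⟨fun d hd => (Finset.mem_filter.1 hd).2,
      fun d₁ h₁ d₂ h₂ => hFc _ (Finset.mem_filter.1 h₁).1 _ (Finset.mem_filter.1 h₂).1⟩, ?_⟩
    intro G hG hsub
    apply Finset.Subset.antisymm _ hsub
    intro d hd
    have hdG : NDiag a k d := hG.1 d hd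
    have hdF : d ∈ F := by
      apply habsorb
      · obtain ⟨i, j, hi, hij, hjk, rfl, hne, hnak⟩ := hdG
        exact ⟨i, j, hi, hij, by omega, rfl, hne, by omega⟩
      · intro e he hcr
        rcases hsplit e he with h | h | ⟨_, rfl⟩ | ⟨_, rfl⟩
        · -- e ∈ F left diag; but is e ∈ G? e ∈ F₁ ⊆ G
          have heG : e ∈ G := hsub (Finset.mem_filter.2 ⟨he, h⟩)
          exact hG.2 _ hd _ heG hcr
        · exact sep_not_cross hdG h hcr
        · exact edge_ak_not_cross_left hak hdG (ncross_symm hcr)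
        · exact edge_kb_not_cross_left hkb hdG (ncross_symm hcr)
      · intro e he hcr
        rcases hsplit e he with h | h | ⟨_, rfl⟩ | ⟨_, rfl⟩
        · have heG : e ∈ G := hsub (Finset.mem_filter.2 ⟨he, h⟩)
          exact hG.2 _ heG _ hd hcr
        · exact sep_not_cross hdG h (ncross_symm hcr)
        · exact edge_ak_not_cross_left hak hdG hcr
        · exact edge_kb_not_cross_left hkb hdG hcr
      · obtain ⟨i, j, hi, hij, hjk, rfl, hne, hnak⟩ := hdG
        exact not_ncross_self hij
    exact Finset.mem_filter.2 ⟨hdF, hdG⟩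
  · -- F₂ ∈ Tri k b
    refine ⟨⟨fun d hd => (Finset.mem_filter.1 hd).2,
      fun d₁ h₁ d₂ h₂ => hFc _ (Finset.mem_filter.1 h₁).1 _ (Finset.mem_filter.1 h₂).1⟩, ?_⟩
    intro G hG hsub
    apply Finset.Subset.antisymm _ hsub
    intro d hd
    have hdG : NDiag k b d := hG.1 d hd
    have hdF : d ∈ F := by
      apply habsorb
      · obtain ⟨i, j, hi, hij, hjb, rfl, hne, hnkb⟩ := hdG
        exact ⟨i, j, by omega, hij, hjb, rfl, hne, by omega⟩
      · intro e he hcr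
        rcases hsplit e he with h | h | ⟨_, rfl⟩ | ⟨_, rfl⟩
        · exact sep_not_cross h hdG (ncross_symm hcr)
        · have heG : e ∈ G := hsub (Finset.mem_filter.2 ⟨he, h⟩)
          exact hG.2 _ hd _ heG hcr
        · exact edge_ak_not_cross_right hak hdG (ncross_symm hcr)
        · exact edge_kb_not_cross_right hkb hdG (ncross_symm hcr)
      · intro e he hcr
        rcases hsplit e he with h | h | ⟨_, rfl⟩ | ⟨_, rfl⟩
        · exact sep_not_cross h hdG hcr
        · have heG : e ∈ G := hsub (Finset.mem_filter.2 ⟨he, h⟩)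
          exact hG.2 _ heG _ hd hcr
        · exact edge_ak_not_cross_right hak hdG hcr
        · exact edge_kb_not_cross_right hkb hdG hcr
      · obtain ⟨i, j, hi, hij, hjb, rfl, hne, hnkb⟩ := hdG
        exact not_ncross_self hij
    exact Finset.mem_filter.2 ⟨hdF, hdG⟩
  · -- F = glue
    ext d
    rw [mem_glue]
    constructor
    · intro hd
      rcases hsplit d hd with h | h | h | h
      · exact Or.inl (Finset.mem_filter.2 ⟨hd, h⟩)
      · exact Or.inr (Or.inl (Finset.mem_filter.2 ⟨hd, h⟩))
      · exact Or.inr (Or.inr (Or.inl h))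
      · exact Or.inr (Or.inr (Or.inr h))
    · rintro (h | h | ⟨hne, rfl⟩ | ⟨hne, rfl⟩)
      · exact (Finset.mem_filter.1 h).1
      · exact (Finset.mem_filter.1 h).1
      · rcases claim1 with h | h
        · exact h
        · omega
      · rcases hkprop with h | h
        · exact h
        · omega


lemma tri_subset_powerset {a b : ℕ} {F : Finset (Finset ℕ)} (hF : F ∈ Tri a b) :
    F ∈ (Finset.range (b + 1)).powerset.powerset := by
  rw [Finset.mem_powerset]
  intro d hd
  rw [Finset.mem_powerset]
  obtain ⟨i, j, hi, hij, hjb, rfl, _, _⟩ := hF.1.1 d hd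
  intro x hx
  rcases Finset.mem_insert.1 hx with rfl | hx
  · exact Finset.mem_range.2 (by omega)
  · rw [Finset.mem_singleton] at hx; subst hx
    exact Finset.mem_range.2 (by omega)

lemma tri_finite (a b : ℕ) : (Tri a b).Finite :=
  Set.Finite.subset (Finset.finite_toSet _) (fun _ hF => tri_subset_powerset hF)

lemma tri_base (a : ℕ) : Tri a (a + 1) = {∅} := by
  have hno : ∀ F, NFace a (a + 1) F → F = ∅ := by
    intro F hF
    rw [Finset.eq_empty_iff_forall_notMem]
    intro d hd
    obtain ⟨i, j, hi, hij, hjb, rfl, hne, _⟩ := hF.1 d hd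
    omega
  ext F
  simp only [Set.mem_singleton_iff]
  constructor
  · intro hF
    exact hno F hF.1
  · rintro rfl
    refine ⟨⟨fun d hd => absurd hd (Finset.notMem_empty d), fun d hd => absurd hd (Finset.notMem_empty d)⟩, ?_⟩
    intro G hG _
    exact hno G hG

lemma tri_decomp {a b : ℕ} (hab : a + 2 ≤ b) :
    (tri_finite a b).toFinset = (Finset.Ioo a b).biUnion (fun k =>
      ((tri_finite a k).toFinset ×ˢ (tri_finite k b).toFinset).image
        (fun p => glue a k b p.1 p.2)) := by
  ext F
  simp only [Set.Finite.mem_toFinset, Finset.mem_biUnion, Finset.mem_image,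
    Finset.mem_product, Finset.mem_Ioo, Prod.exists]
  constructor
  · intro hF
    obtain ⟨k, hak, hkb, F₁, h₁, F₂, h₂, rfl⟩ := glue_surj hab hF
    exact ⟨k, ⟨hak, hkb⟩, F₁, F₂, ⟨by simpa using h₁, by simpa using h₂⟩, rfl⟩
  · rintro ⟨k, ⟨hak, hkb⟩, F₁, F₂, ⟨h₁, h₂⟩, rfl⟩
    exact glue_mem_Tri hak hkb h₁ h₂

lemma tri_card_rec {a b : ℕ} (hab : a + 2 ≤ b) :
    (Tri a b).ncard = ∑ k ∈ Finset.Ioo a b, (Tri a k).ncard * (Tri k b).ncard := by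
  have hcard : ∀ a' b', (Tri a' b').ncard = (tri_finite a' b').toFinset.card := by
    intro a' b'
    exact Set.ncard_eq_toFinset_card _ (tri_finite a' b')
  rw [hcard, tri_decomp hab]
  rw [Finset.card_biUnion]
  · apply Finset.sum_congr rfl
    intro k hk
    rw [Finset.mem_Ioo] at hk
    rw [Finset.card_image_of_injOn, Finset.card_product, hcard, hcard]
    rintro ⟨F₁, F₂⟩ h ⟨G₁, G₂⟩ h' he
    simp only [Finset.mem_coe, Finset.mem_product, Set.Finite.mem_toFinset] at h h'
    have := glue_inj hk.1 hk.2 h.1.1.1 h.2.1.1 h'.1.1.1 h'.2.1.1 he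
    simp [Prod.ext_iff, this.1, this.2]
  · intro k hk k' hk' hne
    rw [Finset.mem_coe, Finset.mem_Ioo] at hk
    rw [Finset.mem_coe, Finset.mem_Ioo] at hk'
    simp only [Function.onFun, Finset.disjoint_left, Finset.mem_image, Finset.mem_product, Prod.exists]
    rintro F ⟨F₁, F₂, ⟨h₁, h₂⟩, rfl⟩ ⟨G₁, G₂, ⟨g₁, g₂⟩, he⟩
    rw [Set.Finite.mem_toFinset] at h₁ h₂ g₁ g₂
    have hap : Apex a b (glue a k b F₁ F₂) k' := by
      rw [← he]
      exact apex_glue hk'.1 hk'.2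
    exact hne (apex_unique hk.1 hk.2 h₁.1.1 h₂.1.1 hap).symm

lemma tri_card : ∀ m a b : ℕ, b = a + m → 1 ≤ m → (Tri a b).ncard = catalan (m - 1) := by
  intro m
  induction m using Nat.strong_induction_on with
  | _ m ih =>
    intro a b hb hm
    rcases Nat.lt_or_ge m 2 with hm2 | hm2
    · have : m = 1 := by omega
      subst this
      subst hb
      rw [tri_base]
      simp
    · subst hb
      rw [tri_card_rec (by omega)]
      have hsum : ∑ k ∈ Finset.Ioo a (a + m), (Tri a k).ncard * (Tri k (a + m)).ncard =
          ∑ i ∈ Finset.range (m - 1), catalan i * catalan (m - 2 - i) := by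
        apply Finset.sum_nbij' (fun k => k - a - 1) (fun i => a + 1 + i)
        · intro k hk
          rw [Finset.mem_Ioo] at hk
          rw [Finset.mem_range]
          omega
        · intro i hi
          rw [Finset.mem_range] at hi
          rw [Finset.mem_Ioo]
          omega
        · intro k hk
          rw [Finset.mem_Ioo] at hk
          omega
        · intro i hi
          rw [Finset.mem_range] at hi
          omega
        · intro k hk
          rw [Finset.mem_Ioo] at hk
          rw [ih (k - a) (by omega) a k (by omega) (by omega),
            ih (a + m - k) (by omega) k (a + m) (by omega) (by omega)]
          congr 2 <;> omega
      rw [hsum]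
      have : catalan (m - 1) = catalan ((m - 2) + 1) := by congr 1; omega
      rw [this, catalan_succ]
      rw [Fin.sum_univ_eq_sum_range (fun i => catalan i * catalan (m - 2 - i)) (m - 2 + 1)]
      apply Finset.sum_congr (by congr 1; omega) (fun _ _ => rfl)

/-- triangulations containing the diagonal `{a, b-1}` -/
lemma tri_card_delta {a b : ℕ} (hab : a + 3 ≤ b) :
    {F | F ∈ Tri a b ∧ ({a, b - 1} : Finset ℕ) ∈ F}.ncard = catalan (b - a - 2) := by
  have himg : {F | F ∈ Tri a b ∧ ({a, b - 1} : Finset ℕ) ∈ F} =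
      (fun p : Finset (Finset ℕ) × Finset (Finset ℕ) => glue a (b - 1) b p.1 p.2) ''
        ((Tri a (b - 1)) ×ˢ (Tri (b - 1) b)) := by
    ext F
    simp only [Set.mem_setOf_eq, Set.mem_image, Set.mem_prod, Prod.exists]
    constructor
    · rintro ⟨hF, hd⟩
      obtain ⟨k, hak, hkb, F₁, h₁, F₂, h₂, rfl⟩ := glue_surj (by omega) hF
      have hkeq : k = b - 1 := by
        rcases mem_glue.1 hd with h | h | ⟨_, h⟩ | ⟨_, h⟩
        · obtain ⟨i, j, hi, hij, hjk, he, _, _⟩ := h₁.1.1 _ h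
          have := pair_inj (show a < b - 1 by omega) hij he
          omega
        · obtain ⟨i, j, hi, hij, hjb, he, _, hn⟩ := h₂.1.1 _ h
          have := pair_inj (show a < b - 1 by omega) hij he
          omega
        · have := pair_inj (show a < b - 1 by omega) hak h
          omega
        · have := pair_inj (show a < b - 1 by omega) hkb h
          omega
      subst hkeq
      exact ⟨F₁, F₂, ⟨h₁, h₂⟩, rfl⟩
    · rintro ⟨F₁, F₂, ⟨h₁, h₂⟩, rfl⟩
      have hak : a < b - 1 := by omega
      have hkb : b - 1 < b := by omega
      refine ⟨glue_mem_Tri hak hkb h₁ h₂, ?_⟩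
      exact mem_glue.2 (Or.inr (Or.inr (Or.inl ⟨by omega, rfl⟩)))
  rw [himg]
  rw [Set.ncard_image_of_injOn]
  · have e1 : Tri a (b - 1) = ↑(tri_finite a (b - 1)).toFinset :=
      (Set.Finite.coe_toFinset _).symm
    have e2 : Tri (b - 1) b = ↑(tri_finite (b - 1) b).toFinset :=
      (Set.Finite.coe_toFinset _).symm
    rw [e1, e2, ← Finset.coe_product, Set.ncard_coe_finset, Finset.card_product]
    have c1 : (tri_finite a (b - 1)).toFinset.card = catalan (b - a - 2) := by
      rw [← Set.ncard_eq_toFinset_card _ (tri_finite a (b - 1)),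
        tri_card (b - 1 - a) a (b - 1) (by omega) (by omega)]
      congr 1
      omega
    have c2 : (tri_finite (b - 1) b).toFinset.card = 1 := by
      rw [← Set.ncard_eq_toFinset_card _ (tri_finite (b - 1) b),
        tri_card 1 (b - 1) b (by omega) (by omega)]
      simp
    rw [c1, c2, mul_one]
  · rintro ⟨F₁, F₂⟩ h ⟨G₁, G₂⟩ h' he
    simp only [Set.mem_prod] at h h'
    have := glue_inj (show a < b - 1 by omega) (show b - 1 < b by omega)
      h.1.1.1 h.2.1.1 h'.1.1.1 h'.2.1.1 he
    simp [Prod.ext_iff, this.1, this.2]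

end
end NGon

namespace NGon
noncomputable section
open Classical

variable {n : ℕ}

/-- push a diagonal to ℕ -/
def eN (d : Finset (Fin n)) : Finset ℕ := d.image Fin.val

/-- push a face to ℕ -/
def toN (F : Finset (Finset (Fin n))) : Finset (Finset ℕ) := F.image eN

/-- pull a diagonal back from ℕ -/
def pb (n : ℕ) (e : Finset ℕ) : Finset (Fin n) :=
  Finset.univ.filter (fun x : Fin n => (x : ℕ) ∈ e)

def ofN (H : Finset (Finset ℕ)) : Finset (Finset (Fin n)) := H.image (pb n)

lemma eN_inj : Function.Injective (eN (n := n)) :=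
  Finset.image_injective Fin.val_injective

lemma toN_inj : Function.Injective (toN (n := n)) :=
  Finset.image_injective eN_inj

lemma eN_pair {i j : Fin n} : eN ({i, j} : Finset (Fin n)) = {(i : ℕ), (j : ℕ)} := by
  simp [eN]

lemma pb_eN (d : Finset (Fin n)) : pb n (eN d) = d := by
  ext x
  simp only [pb, Finset.mem_filter, Finset.mem_univ, true_and, eN, Finset.mem_image]
  constructor
  · rintro ⟨y, hy, he⟩
    rwa [Fin.val_injective he] at hy
  · intro hx
    exact ⟨x, hx, rfl⟩

lemma eN_pb {e : Finset ℕ} (he : ∀ x ∈ e, x < n) : eN (pb n e) = e := by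
  ext x
  simp only [pb, eN, Finset.mem_image, Finset.mem_filter, Finset.mem_univ, true_and]
  constructor
  · rintro ⟨y, hy, rfl⟩
    exact hy
  · intro hx
    exact ⟨⟨x, he x hx⟩, hx, rfl⟩

lemma ofN_toN (F : Finset (Finset (Fin n))) : ofN (toN F) = F := by
  unfold ofN toN
  rw [Finset.image_image]
  have : (pb n ∘ eN) = id := funext pb_eN
  rw [this, Finset.image_id]

lemma mem_toN {F : Finset (Finset (Fin n))} {d : Finset (Fin n)} :
    eN d ∈ toN F ↔ d ∈ F := by
  constructor
  · intro h
    obtain ⟨d', hd', he⟩ := Finset.mem_image.1 h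
    rwa [← eN_inj he]
  · intro h
    exact Finset.mem_image_of_mem _ h

lemma diag_toN (hn : 2 ≤ n) {d : Finset (Fin n)} (hd : IsDiagonal n d) :
    NDiag 0 (n - 1) (eN d) := by
  obtain ⟨i, j, hij, rfl, hne, hnab⟩ := hd
  rw [eN_pair]
  exact ⟨i, j, Nat.zero_le _, hij, by omega, rfl, hne, by simpa using hnab⟩

lemma diag_ofN (hn : 2 ≤ n) {e : Finset ℕ} (he : NDiag 0 (n - 1) e) :
    IsDiagonal n (pb n e) ∧ eN (pb n e) = e := by
  obtain ⟨i, j, hi, hij, hjb, rfl, hne, hnab⟩ := he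
  have hjn : j < n := by omega
  have hin : i < n := by omega
  have hpair : ({i, j} : Finset ℕ) = eN ({⟨i, hin⟩, ⟨j, hjn⟩} : Finset (Fin n)) := by
    rw [eN_pair]
  rw [hpair, pb_eN]
  refine ⟨⟨⟨i, hin⟩, ⟨j, hjn⟩, ?_, rfl, ?_, ?_⟩, rfl⟩
  · exact hij
  · exact hne
  · simpa using hnab

lemma cross_toN {d₁ d₂ : Finset (Fin n)} (h : Crosses n d₁ d₂) :
    NCross (eN d₁) (eN d₂) := by
  obtain ⟨i, j, k, l, h1, h2, h3, h4⟩ := h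
  refine ⟨i, j, k, l, h1, h2, h3, ?_⟩
  rcases h4 with ⟨rfl, rfl⟩ | ⟨rfl, rfl⟩
  · exact Or.inl ⟨eN_pair, eN_pair⟩
  · exact Or.inr ⟨eN_pair, eN_pair⟩

lemma cross_ofN {d₁ d₂ : Finset (Fin n)} (h : NCross (eN d₁) (eN d₂)) :
    Crosses n d₁ d₂ := by
  obtain ⟨i, j, k, l, h1, h2, h3, h4⟩ := h
  have key : ∀ (d : Finset (Fin n)) (p q : ℕ), eN d = {p, q} → p < q →
      ∃ (hp : p < n) (hq : q < n), d = {⟨p, hp⟩, ⟨q, hq⟩} := by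
    intro d p q he hpq
    have hp : p < n := by
      have : p ∈ eN d := he ▸ (by simp)
      obtain ⟨y, _, rfl⟩ := Finset.mem_image.1 this
      exact y.isLt
    have hq : q < n := by
      have : q ∈ eN d := he ▸ (by simp)
      obtain ⟨y, _, rfl⟩ := Finset.mem_image.1 this
      exact y.isLt
    refine ⟨hp, hq, ?_⟩
    apply eN_inj
    rw [he, eN_pair]
  rcases h4 with ⟨e1, e2⟩ | ⟨e1, e2⟩
  · obtain ⟨hi, hk, rfl⟩ := key d₁ i k e1 (by omega)
    obtain ⟨hj, hl, rfl⟩ := key d₂ j l e2 (by omega)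
    exact ⟨⟨i, hi⟩, ⟨j, hj⟩, ⟨k, hk⟩, ⟨l, hl⟩, h1, h2, h3, Or.inl ⟨rfl, rfl⟩⟩
  · obtain ⟨hj, hl, rfl⟩ := key d₁ j l e1 (by omega)
    obtain ⟨hi, hk, rfl⟩ := key d₂ i k e2 (by omega)
    exact ⟨⟨i, hi⟩, ⟨j, hj⟩, ⟨k, hk⟩, ⟨l, hl⟩, h1, h2, h3, Or.inr ⟨rfl, rfl⟩⟩

lemma face_toN (hn : 2 ≤ n) {F : Finset (Finset (Fin n))} (hF : IsFaceA n F) :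
    NFace 0 (n - 1) (toN F) := by
  constructor
  · intro e he
    obtain ⟨d, hd, rfl⟩ := Finset.mem_image.1 he
    exact diag_toN hn (hF.1 d hd)
  · intro e₁ he₁ e₂ he₂ hc
    obtain ⟨d₁, hd₁, rfl⟩ := Finset.mem_image.1 he₁
    obtain ⟨d₂, hd₂, rfl⟩ := Finset.mem_image.1 he₂
    exact hF.2 d₁ hd₁ d₂ hd₂ (cross_ofN hc)

lemma face_ofN (hn : 2 ≤ n) {H : Finset (Finset ℕ)} (hH : NFace 0 (n - 1) H) :
    IsFaceA n (ofN H) ∧ toN (ofN (n := n) H) = H := by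
  have hlift : ∀ e ∈ H, IsDiagonal n (pb n e) ∧ eN (pb n e) = e :=
    fun e he => diag_ofN hn (hH.1 e he)
  constructor
  constructor
  · intro d hd
    obtain ⟨e, he, rfl⟩ := Finset.mem_image.1 hd
    exact (hlift e he).1
  · intro d₁ hd₁ d₂ hd₂ hc
    obtain ⟨e₁, he₁, rfl⟩ := Finset.mem_image.1 hd₁
    obtain ⟨e₂, he₂, rfl⟩ := Finset.mem_image.1 hd₂
    apply hH.2 e₁ he₁ e₂ he₂
    have := cross_toN hc
    rwa [(hlift e₁ he₁).2, (hlift e₂ he₂).2] at this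
  · unfold toN ofN
    rw [Finset.image_image]
    ext e
    simp only [Finset.mem_image, Function.comp]
    constructor
    · rintro ⟨e', he', rfl⟩
      rw [(hlift e' he').2]
      exact he'
    · intro he
      exact ⟨e, he, (hlift e he).2⟩

/-- the set of triangulations of the `n`-gon -/
def TriA (n : ℕ) : Set (Finset (Finset (Fin n))) :=
  {F | IsFaceA n F ∧ ∀ G, IsFaceA n G → F ⊆ G → G = F}

lemma toN_TriA (hn : 2 ≤ n) {F : Finset (Finset (Fin n))} (hF : F ∈ TriA n) :
    toN F ∈ Tri 0 (n - 1) := by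
  refine ⟨face_toN hn hF.1, ?_⟩
  intro H hH hsub
  have hof := face_ofN hn hH
  have hsub' : F ⊆ ofN H := by
    intro d hd
    have : eN d ∈ H := hsub (Finset.mem_image_of_mem _ hd)
    have : pb n (eN d) ∈ ofN H := Finset.mem_image_of_mem _ this
    rwa [pb_eN] at this
  have := hF.2 (ofN H) hof.1 hsub'
  rw [← hof.2, this]

lemma toN_TriA_surj (hn : 2 ≤ n) {H : Finset (Finset ℕ)} (hH : H ∈ Tri 0 (n - 1)) :
    ∃ F ∈ TriA n, toN F = H := by
  have hof := face_ofN hn hH.1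
  refine ⟨ofN H, ⟨hof.1, ?_⟩, hof.2⟩
  intro G hG hsub
  have hGN : NFace 0 (n - 1) (toN G) := face_toN hn hG
  have : toN (ofN (n := n) H) ⊆ toN G := Finset.image_subset_image hsub
  rw [hof.2] at this
  have heq := hH.2 (toN G) hGN this
  have : ofN (toN G) = ofN (n := n) H := by rw [heq]
  rwa [ofN_toN] at this

lemma TriA_image (hn : 2 ≤ n) : toN '' (TriA n) = Tri 0 (n - 1) := by
  apply Set.Subset.antisymm
  · rintro _ ⟨F, hF, rfl⟩
    exact toN_TriA hn hF
  · intro H hH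
    obtain ⟨F, hF, he⟩ := toN_TriA_surj hn hH
    exact ⟨F, hF, he⟩

lemma TriA_card (hn : 5 ≤ n) : (TriA n).ncard = catalan (n - 2) := by
  rw [← Set.ncard_image_of_injective (TriA n) (toN_inj (n := n)), TriA_image (by omega),
    tri_card (n - 1) 0 (n - 1) (by omega) (by omega)]
  congr 1

lemma TriA_delta_card (hn : 5 ≤ n) :
    {F | F ∈ TriA n ∧ ({⟨0, by omega⟩, ⟨n - 2, by omega⟩} : Finset (Fin n)) ∈ F}.ncard =
      catalan (n - 3) := by
  have himg : toN '' {F | F ∈ TriA n ∧ ({⟨0, by omega⟩, ⟨n - 2, by omega⟩} : Finset (Fin n)) ∈ F} =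
      {H | H ∈ Tri 0 (n - 1) ∧ ({0, n - 2} : Finset ℕ) ∈ H} := by
    ext H
    constructor
    · rintro ⟨F, ⟨hF, hd⟩, rfl⟩
      refine ⟨toN_TriA (by omega) hF, ?_⟩
      have : eN ({⟨0, by omega⟩, ⟨n - 2, by omega⟩} : Finset (Fin n)) ∈ toN F :=
        mem_toN.2 hd
      rwa [eN_pair] at this
    · rintro ⟨hH, hd⟩
      obtain ⟨F, hF, rfl⟩ := toN_TriA_surj (by omega) hH
      refine ⟨F, ⟨hF, ?_⟩, rfl⟩
      rw [← mem_toN (n := n)]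
      rwa [eN_pair (n := n) (i := ⟨0, by omega⟩) (j := ⟨n - 2, by omega⟩)]
    
  rw [← Set.ncard_image_of_injective _ (toN_inj (n := n)), himg]
  have : {H | H ∈ Tri 0 (n - 1) ∧ ({0, n - 2} : Finset ℕ) ∈ H} =
      {H | H ∈ Tri 0 (n - 1) ∧ ({0, (n - 1) - 1} : Finset ℕ) ∈ H} := by
    have : n - 2 = (n - 1) - 1 := by omega
    rw [this]
  rw [this, tri_card_delta (by omega)]
  congr 1

/-- every face extends to a triangulation -/
lemma exists_max_TriA (n : ℕ) {H : Finset (Finset (Fin n))} (hH : IsFaceA n H) :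
    ∃ T ∈ TriA n, H ⊆ T := by
  have hfin : {G : Finset (Finset (Fin n)) | IsFaceA n G ∧ H ⊆ G}.Finite :=
    Set.toFinite _
  have hne : {G : Finset (Finset (Fin n)) | IsFaceA n G ∧ H ⊆ G}.Nonempty :=
    ⟨H, hH, Finset.Subset.refl H⟩
  obtain ⟨T, hT, hmax⟩ := Set.Finite.exists_maximalFor id _ hfin hne
  refine ⟨T, ⟨hT.1, ?_⟩, hT.2⟩
  intro G hG hsub
  exact le_antisymm (hmax ⟨hG, hT.2.trans hsub⟩ hsub) hsub


end
end NGon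

/-! ### The complex layer -/

namespace NGon

def dlt (m : ℕ) (hm : 5 ≤ m) : Finset (Fin m) := {⟨0, by omega⟩, ⟨m - 2, by omega⟩}

noncomputable section
open Classical

variable {n : ℕ} (hn : 5 ≤ n)

def toK (F : Finset (Finset (Fin n))) : Finset (KVert n) := F.image Sum.inl

lemma fEdge_eq : fEdge n hn = {Sum.inl (dlt n hn), Sum.inr 0} := rfl

lemma mem_toK {F : Finset (Finset (Fin n))} {d : Finset (Fin n)} :
    Sum.inl d ∈ toK F ↔ d ∈ F := by
  simp [toK]

lemma inr_not_mem_toK {F : Finset (Finset (Fin n))} {t : Fin 3} :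
    Sum.inr t ∉ toK F := by
  simp [toK]

lemma toK_inj : Function.Injective (toK (n := n)) :=
  Finset.image_injective Sum.inl_injective

/-- predicate : `w` contains only `inr` vertices -/
def WOnly (w : Finset (KVert n)) : Prop := ∀ x ∈ w, ∃ t, x = Sum.inr t

lemma wOnly_empty : WOnly (∅ : Finset (KVert n)) := by intro x hx; simp at hx

lemma wOnly_singleton {t : Fin 3} : WOnly ({Sum.inr t} : Finset (KVert n)) := by
  intro x hx
  rw [Finset.mem_singleton] at hx
  exact ⟨t, hx⟩

lemma wOnly_insert {t : Fin 3} {w : Finset (KVert n)} (h : WOnly w) :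
    WOnly (insert (Sum.inr t) w) := by
  intro x hx
  rcases Finset.mem_insert.1 hx with rfl | hx
  · exact ⟨t, rfl⟩
  · exact h x hx

lemma wOnly_pair {s t : Fin 3} : WOnly ({Sum.inr s, Sum.inr t} : Finset (KVert n)) :=
  wOnly_insert wOnly_singleton

lemma inl_mem_union {G : Finset (Finset (Fin n))} {w : Finset (KVert n)} (hw : WOnly w)
    {d : Finset (Fin n)} : Sum.inl d ∈ toK G ∪ w ↔ d ∈ G := by
  rw [Finset.mem_union, mem_toK]
  constructor
  · rintro (h | h)
    · exact h
    · obtain ⟨t, ht⟩ := hw _ h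
      simp at ht
  · exact Or.inl

lemma inr_mem_union {G : Finset (Finset (Fin n))} {w : Finset (KVert n)} {t : Fin 3} :
    Sum.inr t ∈ toK G ∪ w ↔ Sum.inr t ∈ w := by
  rw [Finset.mem_union]
  constructor
  · rintro (h | h)
    · exact absurd h inr_not_mem_toK
    · exact h
  · exact Or.inr

lemma decomp_eq {G₁ G₂ : Finset (Finset (Fin n))} {w₁ w₂ : Finset (KVert n)}
    (h₁ : WOnly w₁) (h₂ : WOnly w₂) (h : toK G₁ ∪ w₁ = toK G₂ ∪ w₂) :
    G₁ = G₂ ∧ w₁ = w₂ := by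
  constructor
  · ext d
    rw [← inl_mem_union (w := w₁) h₁, ← inl_mem_union (w := w₂) h₂, h]
  · ext x
    rcases x with d | t
    · constructor
      · intro hx
        exact absurd ((h₁ _ hx).choose_spec) (by simp)
      · intro hx
        exact absurd ((h₂ _ hx).choose_spec) (by simp)
    · rw [← inr_mem_union (G := G₁) (w := w₁), h, inr_mem_union]

lemma inl_subset_union {T G : Finset (Finset (Fin n))} {w : Finset (KVert n)}
    (hw : WOnly w) (h : toK T ⊆ toK G ∪ w) : T ⊆ G := by
  intro d hd
  exact (inl_mem_union hw).1 (h (mem_toK.2 hd))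

/-- structure of members of the join -/
lemma join_struct {F : Finset (KVert n)}
    (h : F ∈ JoinC (AComplex n) (SZero n)) :
    ∃ G w, IsFaceA n G ∧
      (w = ∅ ∨ w = {Sum.inr 0} ∨ w = {Sum.inr 1}) ∧ F = toK G ∪ w := by
  obtain ⟨f, hf, g, hg, rfl⟩ := h
  obtain ⟨G, hG, rfl⟩ := hf
  simp only [SZero, Set.mem_insert_iff, Set.mem_singleton_iff] at hg
  rcases hg with hg | hg | hg
  · exact ⟨G, ∅, hG, Or.inl rfl, by rw [hg]; rfl⟩
  · exact ⟨G, {Sum.inr 0}, hG, Or.inr (Or.inl rfl), by rw [hg]; rfl⟩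
  · exact ⟨G, {Sum.inr 1}, hG, Or.inr (Or.inr rfl), by rw [hg]; rfl⟩

lemma shape_wOnly {w : Finset (KVert n)}
    (h : w = ∅ ∨ w = {Sum.inr 0} ∨ w = {Sum.inr 1}) : WOnly w := by
  rcases h with rfl | rfl | rfl
  · exact wOnly_empty
  · exact wOnly_singleton
  · exact wOnly_singleton

lemma join_mem {G : Finset (Finset (Fin n))} (hG : IsFaceA n G) {w : Finset (KVert n)}
    (hw : w = ∅ ∨ w = {Sum.inr 0} ∨ w = {Sum.inr 1}) :
    toK G ∪ w ∈ JoinC (AComplex n) (SZero n) := by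
  refine ⟨toK G, ⟨G, hG, rfl⟩, w, ?_, rfl⟩
  rcases hw with rfl | rfl | rfl <;> simp [SZero]

lemma fEdge_subset {S : Finset (KVert n)} :
    fEdge n hn ⊆ S ↔ Sum.inl (dlt n hn) ∈ S ∧ Sum.inr 0 ∈ S := by
  rw [fEdge_eq, Finset.insert_subset_iff, Finset.singleton_subset_iff]

lemma fEdge_union {G : Finset (Finset (Fin n))} {w : Finset (KVert n)} :
    fEdge n hn ∪ (toK G ∪ w) = toK (insert (dlt n hn) G) ∪ insert (Sum.inr 0) w := by
  ext x
  simp only [Finset.mem_union, fEdge_eq hn, Finset.mem_insert, Finset.mem_singleton,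
    toK, Finset.mem_image, Finset.image_insert]
  aesop

/-- structure of members of `KComplex` -/
lemma K_struct {F : Finset (KVert n)} (h : F ∈ KComplex n hn) :
    (∃ G w, IsFaceA n G ∧ (w = ∅ ∨ w = {Sum.inr 0} ∨ w = {Sum.inr 1}) ∧
      ¬(dlt n hn ∈ G ∧ Sum.inr 0 ∈ w) ∧ F = toK G ∪ w) ∨
    (∃ G w, IsFaceA n G ∧ (w = ∅ ∨ w = {Sum.inr 0}) ∧
      ¬(dlt n hn ∈ G ∧ Sum.inr 0 ∈ w) ∧ IsFaceA n (insert (dlt n hn) G) ∧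
      F = (toK G ∪ w) ∪ {Sum.inr 2}) := by
  rcases h with ⟨hF, hns⟩ | ⟨g, hg, hns, hfg, rfl⟩
  · obtain ⟨G, w, hG, hw, rfl⟩ := join_struct hF
    left
    refine ⟨G, w, hG, hw, ?_, rfl⟩
    intro ⟨h1, h2⟩
    exact hns ((fEdge_subset hn).2 ⟨(inl_mem_union (shape_wOnly hw)).2 h1,
      (inr_mem_union).2 h2⟩)
  · obtain ⟨G, w, hG, hw, rfl⟩ := join_struct hg
    right
    have hfu : fEdge n hn ∪ (toK G ∪ w) = toK (insert (dlt n hn) G) ∪ insert (Sum.inr 0) w :=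
      fEdge_union hn
    rw [hfu] at hfg
    obtain ⟨G', w', hG', hw', he⟩ := join_struct hfg
    have hd := decomp_eq (wOnly_insert (shape_wOnly hw)) (shape_wOnly hw') he
    have hGface : IsFaceA n (insert (dlt n hn) G) := hd.1 ▸ hG'
    have hwsub : w = ∅ ∨ w = {Sum.inr 0} := by
      have h0 : Sum.inr 0 ∈ w' := by
        rw [← hd.2]
        exact Finset.mem_insert_self _ _
      rcases hw' with rfl | rfl | rfl
      · simp at h0
      · -- w' = {inr 0} : insert (inr 0) w = {inr 0} so w ⊆ {inr 0}
        have : insert (Sum.inr 0) w = {Sum.inr 0} := hd.2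
        have hsub : w ⊆ {Sum.inr 0} := by
          intro x hx
          rw [← this]
          exact Finset.mem_insert_of_mem hx
        rcases Finset.subset_singleton_iff.1 hsub with h | h
        · exact Or.inl h
        · exact Or.inr h
      · rw [Finset.mem_singleton] at h0
        simp at h0
    refine ⟨G, w, hG, hwsub, ?_, hGface, rfl⟩
    intro ⟨h1, h2⟩
    exact hns ((fEdge_subset hn).2 ⟨(inl_mem_union (shape_wOnly hw)).2 h1,
      (inr_mem_union).2 h2⟩)


lemma faceA_mono {F G : Finset (Finset (Fin n))} (h : IsFaceA n F) (hg : G ⊆ F) :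
    IsFaceA n G :=
  ⟨fun d hd => h.1 d (hg hd), fun d₁ h₁ d₂ h₂ => h.2 d₁ (hg h₁) d₂ (hg h₂)⟩

lemma wOnly_union {w w' : Finset (KVert n)} (h : WOnly w) (h' : WOnly w') :
    WOnly (w ∪ w') := by
  intro x hx
  rcases Finset.mem_union.1 hx with hx | hx
  · exact h x hx
  · exact h' x hx

lemma K_left {F : Finset (KVert n)} (hF : F ∈ JoinC (AComplex n) (SZero n))
    (h : ¬ fEdge n hn ⊆ F) : F ∈ KComplex n hn := Or.inl ⟨hF, h⟩

lemma K_right {F g : Finset (KVert n)} (hg : g ∈ JoinC (AComplex n) (SZero n))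
    (hns : ¬ fEdge n hn ⊆ g) (hfg : fEdge n hn ∪ g ∈ JoinC (AComplex n) (SZero n))
    (he : F = g ∪ {Sum.inr 2}) : F ∈ KComplex n hn := Or.inr ⟨g, hg, hns, hfg, he⟩

lemma not_fsub_w1 {G : Finset (Finset (Fin n))} {w : Finset (KVert n)} (hw : WOnly w)
    (hG : dlt n hn ∉ G) : ¬ fEdge n hn ⊆ toK G ∪ w := by
  rw [fEdge_subset hn, inl_mem_union hw]
  tauto

lemma not_fsub_w0 {G : Finset (Finset (Fin n))} {w : Finset (KVert n)}
    (h0 : Sum.inr 0 ∉ w) : ¬ fEdge n hn ⊆ toK G ∪ w := by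
  rw [fEdge_subset hn, inr_mem_union]
  tauto

/-- membership lemma 1 -/
lemma K1mem {T : Finset (Finset (Fin n))} (hT : IsFaceA n T) (hd : dlt n hn ∉ T) :
    toK T ∪ {Sum.inr 0} ∈ KComplex n hn :=
  K_left hn (join_mem hT (Or.inr (Or.inl rfl))) (not_fsub_w1 hn wOnly_singleton hd)

/-- membership lemma 2 -/
lemma K2mem {T : Finset (Finset (Fin n))} (hT : IsFaceA n T) :
    toK T ∪ {Sum.inr 1} ∈ KComplex n hn :=
  K_left hn (join_mem hT (Or.inr (Or.inr rfl)))
    (not_fsub_w0 hn (by simp))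

/-- membership lemma 3 -/
lemma K3mem {T : Finset (Finset (Fin n))} (hT : IsFaceA n T) (hd : dlt n hn ∈ T) :
    toK T ∪ {Sum.inr 2} ∈ KComplex n hn := by
  have hjoin : toK T ∈ JoinC (AComplex n) (SZero n) := by
    have := join_mem (w := ∅) hT (Or.inl rfl)
    rwa [Finset.union_empty] at this
  apply K_right hn (g := toK T) hjoin
  · rw [fEdge_subset hn]
    rintro ⟨-, h0⟩
    exact inr_not_mem_toK h0
  · have h1 : fEdge n hn ∪ (toK T ∪ ∅) = toK (insert (dlt n hn) T) ∪ insert (Sum.inr 0) ∅ :=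
      fEdge_union hn
    rw [Finset.union_empty] at h1
    rw [h1, Finset.insert_eq_self.2 hd]
    exact join_mem hT (Or.inr (Or.inl rfl))
  · rfl

/-- membership lemma 4 -/
lemma K4mem {T : Finset (Finset (Fin n))} (hT : IsFaceA n T) (hd : dlt n hn ∈ T) :
    toK (T.erase (dlt n hn)) ∪ {Sum.inr 0, Sum.inr 2} ∈ KComplex n hn := by
  have hTe : IsFaceA n (T.erase (dlt n hn)) := faceA_mono hT (Finset.erase_subset _ _)
  apply K_right hn (g := toK (T.erase (dlt n hn)) ∪ {Sum.inr 0})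
    (join_mem hTe (Or.inr (Or.inl rfl)))
  · exact not_fsub_w1 hn wOnly_singleton (Finset.notMem_erase _ _)
  · have h1 : fEdge n hn ∪ (toK (T.erase (dlt n hn)) ∪ {Sum.inr 0}) =
        toK (insert (dlt n hn) (T.erase (dlt n hn))) ∪ insert (Sum.inr 0) {Sum.inr 0} :=
      fEdge_union hn
    rw [h1, Finset.insert_erase hd, Finset.insert_eq_self.2 (Finset.mem_singleton_self _)]
    exact join_mem hT (Or.inr (Or.inl rfl))
  · rw [Finset.union_assoc]
    rfl

lemma w_shape0 {w : Finset (KVert n)} (hw : w = ∅ ∨ w = {Sum.inr 0} ∨ w = {Sum.inr 1})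
    (h : Sum.inr 0 ∈ w) : w = {Sum.inr 0} := by
  rcases hw with rfl | rfl | rfl
  · simp at h
  · rfl
  · rw [Finset.mem_singleton] at h
    exact absurd h (by simp)

lemma w_shape1 {w : Finset (KVert n)} (hw : w = ∅ ∨ w = {Sum.inr 0} ∨ w = {Sum.inr 1})
    (h : Sum.inr 1 ∈ w) : w = {Sum.inr 1} := by
  rcases hw with rfl | rfl | rfl
  · simp at h
  · rw [Finset.mem_singleton] at h
    exact absurd h (by simp)
  · rfl

lemma w_shape2 {w : Finset (KVert n)} (hw : w = ∅ ∨ w = {Sum.inr 0} ∨ w = {Sum.inr 1})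
    (h : Sum.inr 2 ∈ w) : False := by
  rcases hw with rfl | rfl | rfl
  · simp at h
  · rw [Finset.mem_singleton] at h
    exact absurd h (by simp)
  · rw [Finset.mem_singleton] at h
    exact absurd h (by simp)

/-- normal form for right-branch members -/
lemma right_norm {G : Finset (Finset (Fin n))} {w : Finset (KVert n)} :
    (toK G ∪ w) ∪ {Sum.inr 2} = toK G ∪ (w ∪ {Sum.inr 2}) := Finset.union_assoc _ _ _

/-- the four families -/
def A1 (n : ℕ) (hn : 5 ≤ n) : Set (Finset (KVert n)) :=
  (fun T => toK T ∪ {Sum.inr 0}) '' {T | T ∈ TriA n ∧ dlt n hn ∉ T}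

def A2 (n : ℕ) (hn : 5 ≤ n) : Set (Finset (KVert n)) :=
  (fun T => toK T ∪ {Sum.inr 1}) '' TriA n

def A3 (n : ℕ) (hn : 5 ≤ n) : Set (Finset (KVert n)) :=
  (fun T => toK T ∪ {Sum.inr 2}) '' {T | T ∈ TriA n ∧ dlt n hn ∈ T}

def A4 (n : ℕ) (hn : 5 ≤ n) : Set (Finset (KVert n)) :=
  (fun T => toK (T.erase (dlt n hn)) ∪ {Sum.inr 0, Sum.inr 2}) ''
    {T | T ∈ TriA n ∧ dlt n hn ∈ T}

def MaxK (n : ℕ) (hn : 5 ≤ n) : Set (Finset (KVert n)) :=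
  {F | F ∈ KComplex n hn ∧ ∀ G ∈ KComplex n hn, F ⊆ G → G = F}

lemma max1 {T : Finset (Finset (Fin n))} (hT : T ∈ TriA n) (hd : dlt n hn ∉ T) :
    toK T ∪ {Sum.inr 0} ∈ MaxK n hn := by
  refine ⟨K1mem hn hT.1 hd, ?_⟩
  intro G hG hsub
  have h0G : Sum.inr 0 ∈ G := hsub (Finset.mem_union_right _ (Finset.mem_singleton_self _))
  rcases K_struct hn hG with ⟨G', w', hface, hw, hnf, rfl⟩ | ⟨G', w', hface, hw, hnf, hins, rfl⟩
  · have hw0 : w' = {Sum.inr 0} := w_shape0 hw (inr_mem_union.1 h0G)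
    subst hw0
    have hTG : T ⊆ G' := inl_subset_union wOnly_singleton
      ((Finset.union_subset_iff.1 hsub).1)
    rw [hT.2 G' hface hTG]
  · exfalso
    rw [right_norm] at h0G hsub
    have h0w : Sum.inr 0 ∈ w' := by
      rcases Finset.mem_union.1 (inr_mem_union.1 h0G) with h | h
      · exact h
      · rw [Finset.mem_singleton] at h
        exact absurd h (by simp)
    have hTG : T ⊆ G' := inl_subset_union
      (wOnly_union (shape_wOnly (hw.imp_right Or.inl)) wOnly_singleton)
      ((Finset.union_subset_iff.1 hsub).1)
    have : insert (dlt n hn) G' = T := hT.2 _ hins (hTG.trans (Finset.subset_insert _ _))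
    exact hd (this ▸ Finset.mem_insert_self _ _)

lemma max2 {T : Finset (Finset (Fin n))} (hT : T ∈ TriA n) :
    toK T ∪ {Sum.inr 1} ∈ MaxK n hn := by
  refine ⟨K2mem hn hT.1, ?_⟩
  intro G hG hsub
  have h1G : Sum.inr 1 ∈ G := hsub (Finset.mem_union_right _ (Finset.mem_singleton_self _))
  rcases K_struct hn hG with ⟨G', w', hface, hw, hnf, rfl⟩ | ⟨G', w', hface, hw, hnf, hins, rfl⟩
  · have hw1 : w' = {Sum.inr 1} := w_shape1 hw (inr_mem_union.1 h1G)
    subst hw1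
    have hTG : T ⊆ G' := inl_subset_union wOnly_singleton
      ((Finset.union_subset_iff.1 hsub).1)
    rw [hT.2 G' hface hTG]
  · exfalso
    rw [right_norm] at h1G
    rcases Finset.mem_union.1 (inr_mem_union.1 h1G) with h | h
    · exact w_shape2 ((hw.imp_right Or.inl).imp_right (Or.imp_left id)) (by
        rcases hw with rfl | rfl
        · simp at h
        · rw [Finset.mem_singleton] at h
          exact absurd h (by simp))
    · rw [Finset.mem_singleton] at h
      exact absurd h (by simp)

lemma max3 {T : Finset (Finset (Fin n))} (hT : T ∈ TriA n) (hd : dlt n hn ∈ T) :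
    toK T ∪ {Sum.inr 2} ∈ MaxK n hn := by
  refine ⟨K3mem hn hT.1 hd, ?_⟩
  intro G hG hsub
  have h2G : Sum.inr 2 ∈ G := hsub (Finset.mem_union_right _ (Finset.mem_singleton_self _))
  rcases K_struct hn hG with ⟨G', w', hface, hw, hnf, rfl⟩ | ⟨G', w', hface, hw, hnf, hins, rfl⟩
  · exact absurd (inr_mem_union.1 h2G) (fun h => w_shape2 hw h)
  · have hww : WOnly (w' ∪ {Sum.inr 2}) :=
      wOnly_union (shape_wOnly (hw.imp_right Or.inl)) wOnly_singleton
    rw [right_norm] at hsub ⊢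
    have hTG : T ⊆ G' := inl_subset_union hww ((Finset.union_subset_iff.1 hsub).1)
    have hG'T : G' = T := hT.2 G' hface hTG
    subst hG'T
    have hw0 : Sum.inr 0 ∉ w' := fun h => hnf ⟨hTG hd, h⟩
    have hwe : w' = ∅ := by
      rcases hw with rfl | rfl
      · rfl
      · exact absurd (Finset.mem_singleton_self _) hw0
    subst hwe
    rw [Finset.empty_union]

lemma max4 {T : Finset (Finset (Fin n))} (hT : T ∈ TriA n) (hd : dlt n hn ∈ T) :
    toK (T.erase (dlt n hn)) ∪ {Sum.inr 0, Sum.inr 2} ∈ MaxK n hn := by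
  refine ⟨K4mem hn hT.1 hd, ?_⟩
  intro G hG hsub
  have h2G : Sum.inr 2 ∈ G := hsub (Finset.mem_union_right _ (by simp))
  have h0G : Sum.inr 0 ∈ G := hsub (Finset.mem_union_right _ (by simp))
  rcases K_struct hn hG with ⟨G', w', hface, hw, hnf, rfl⟩ | ⟨G', w', hface, hw, hnf, hins, rfl⟩
  · exact absurd (inr_mem_union.1 h2G) (fun h => w_shape2 hw h)
  · have hww : WOnly (w' ∪ {Sum.inr 2}) :=
      wOnly_union (shape_wOnly (hw.imp_right Or.inl)) wOnly_singleton
    rw [right_norm] at hsub ⊢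
    have h0w : Sum.inr 0 ∈ w' := by
      rcases Finset.mem_union.1 (inr_mem_union.1 (right_norm (n := n) ▸ h0G)) with h | h
      · exact h
      · rw [Finset.mem_singleton] at h
        exact absurd h (by simp)
    have hdG' : dlt n hn ∉ G' := fun h => hnf ⟨h, h0w⟩
    have hEG : T.erase (dlt n hn) ⊆ G' :=
      inl_subset_union hww ((Finset.union_subset_iff.1 hsub).1)
    have hTi : T ⊆ insert (dlt n hn) G' := by
      intro d hdT
      by_cases hde : d = dlt n hn
      · exact hde ▸ Finset.mem_insert_self _ _
      · exact Finset.mem_insert_of_mem (hEG (Finset.mem_erase.2 ⟨hde, hdT⟩))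
    have hins' : insert (dlt n hn) G' = T := hT.2 _ hins hTi
    have hG'E : G' = T.erase (dlt n hn) := by
      apply Finset.Subset.antisymm _ hEG
      intro x hx
      exact Finset.mem_erase.2 ⟨fun he => hdG' (he ▸ hx), hins' ▸ Finset.mem_insert_of_mem hx⟩
    subst hG'E
    have hw0 : w' = {Sum.inr 0} := by
      rcases hw with rfl | rfl
      · simp at h0w
      · rfl
    subst hw0
    rfl


lemma maxK_eq : MaxK n hn = A1 n hn ∪ A2 n hn ∪ A3 n hn ∪ A4 n hn := by
  apply Set.Subset.antisymm
  · -- hard direction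
    intro F hF
    rcases K_struct hn hF.1 with ⟨G, w, hface, hw, hnf, rfl⟩ | ⟨G, w, hface, hw, hnf, hins, rfl⟩
    · rcases hw with rfl | rfl | rfl
      · -- w = ∅ : not maximal, contradiction
        exfalso
        obtain ⟨T, hT, hGT⟩ := exists_max_TriA n hface
        have hsub : toK G ∪ ∅ ⊆ toK T ∪ {Sum.inr 1} :=
          Finset.union_subset_union (Finset.image_subset_image hGT) (by simp)
        have := hF.2 _ (K2mem hn hT.1) hsub
        have h1 : Sum.inr 1 ∈ toK G ∪ (∅ : Finset (KVert n)) := by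
          rw [← this]
          exact Finset.mem_union_right _ (Finset.mem_singleton_self _)
        rw [Finset.union_empty] at h1
        exact inr_not_mem_toK h1
      · -- w = {inr 0}
        have hdG : dlt n hn ∉ G := fun h => hnf ⟨h, Finset.mem_singleton_self _⟩
        by_cases hfd : IsFaceA n (insert (dlt n hn) G)
        · exfalso
          obtain ⟨T, hT, hGT⟩ := exists_max_TriA n hfd
          have hdT : dlt n hn ∈ T := hGT (Finset.mem_insert_self _ _)
          have hGE : G ⊆ T.erase (dlt n hn) := fun x hx =>
            Finset.mem_erase.2 ⟨fun he => hdG (he ▸ hx),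
              hGT (Finset.mem_insert_of_mem hx)⟩
          have hsub : toK G ∪ {Sum.inr 0} ⊆ toK (T.erase (dlt n hn)) ∪ {Sum.inr 0, Sum.inr 2} :=
            Finset.union_subset_union (Finset.image_subset_image hGE) (by simp)
          have := hF.2 _ (K4mem hn hT.1 hdT) hsub
          have h2 : Sum.inr 2 ∈ toK G ∪ ({Sum.inr 0} : Finset (KVert n)) := by
            rw [← this]
            exact Finset.mem_union_right _ (by simp)
          rcases Finset.mem_union.1 h2 with h | h
          · exact inr_not_mem_toK h
          · rw [Finset.mem_singleton] at h
            exact absurd h (by simp)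
        · obtain ⟨T, hT, hGT⟩ := exists_max_TriA n hface
          have hdT : dlt n hn ∉ T := by
            intro hdT
            exact hfd (faceA_mono hT.1 (Finset.insert_subset hdT hGT))
          have hsub : toK G ∪ {Sum.inr 0} ⊆ toK T ∪ {Sum.inr 0} :=
            Finset.union_subset_union (Finset.image_subset_image hGT) (by simp)
          have heq := hF.2 _ (K1mem hn hT.1 hdT) hsub
          have := decomp_eq (wOnly_singleton (n := n)) wOnly_singleton heq
          left; left; left
          exact ⟨T, ⟨hT, hdT⟩, heq⟩
      · -- w = {inr 1}
        obtain ⟨T, hT, hGT⟩ := exists_max_TriA n hface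
        have hsub : toK G ∪ {Sum.inr 1} ⊆ toK T ∪ {Sum.inr 1} :=
          Finset.union_subset_union (Finset.image_subset_image hGT) (by simp)
        have heq := hF.2 _ (K2mem hn hT.1) hsub
        left; left; right
        exact ⟨T, hT, heq⟩
    · -- right branch
      rcases hw with rfl | rfl
      · -- w = ∅
        obtain ⟨T, hT, hGT'⟩ := exists_max_TriA n hins
        have hdT : dlt n hn ∈ T := hGT' (Finset.mem_insert_self _ _)
        have hGT : G ⊆ T := (Finset.subset_insert _ _).trans hGT'
        rw [right_norm, Finset.empty_union]
        rw [right_norm, Finset.empty_union] at hF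
        have hsub : toK G ∪ {Sum.inr 2} ⊆ toK T ∪ {Sum.inr 2} :=
          Finset.union_subset_union (Finset.image_subset_image hGT) (by simp)
        have heq := hF.2 _ (K3mem hn hT.1 hdT) hsub
        left; right
        exact ⟨T, ⟨hT, hdT⟩, heq⟩
      · -- w = {inr 0}
        have hdG : dlt n hn ∉ G := fun h => hnf ⟨h, Finset.mem_singleton_self _⟩
        obtain ⟨T, hT, hGT'⟩ := exists_max_TriA n hins
        have hdT : dlt n hn ∈ T := hGT' (Finset.mem_insert_self _ _)
        have hGE : G ⊆ T.erase (dlt n hn) := fun x hx =>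
          Finset.mem_erase.2 ⟨fun he => hdG (he ▸ hx), hGT' (Finset.mem_insert_of_mem hx)⟩
        rw [right_norm]
        rw [right_norm] at hF
        have hsub : toK G ∪ ({Sum.inr 0} ∪ {Sum.inr 2}) ⊆
            toK (T.erase (dlt n hn)) ∪ {Sum.inr 0, Sum.inr 2} :=
          Finset.union_subset_union (Finset.image_subset_image hGE) (by
            intro x hx
            rcases Finset.mem_union.1 hx with h | h
            · rw [Finset.mem_singleton] at h
              simp [h]
            · rw [Finset.mem_singleton] at h
              simp [h])
        have heq := hF.2 _ (K4mem hn hT.1 hdT) hsub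
        right
        exact ⟨T, ⟨hT, hdT⟩, heq⟩
  · -- easy direction
    rintro F (((⟨T, ⟨hT, hd⟩, rfl⟩ | ⟨T, hT, rfl⟩) | ⟨T, ⟨hT, hd⟩, rfl⟩) | ⟨T, ⟨hT, hd⟩, rfl⟩)
    · exact max1 hn hT hd
    · exact max2 hn hT
    · exact max3 hn hT hd
    · exact max4 hn hT hd


lemma TriA_delta_card' : {F | F ∈ TriA n ∧ dlt n hn ∈ F}.ncard = catalan (n - 3) :=
  TriA_delta_card hn

lemma A1_card : (A1 n hn).ncard = catalan (n - 2) - catalan (n - 3) := by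
  unfold A1
  rw [Set.ncard_image_of_injOn]
  · have : {T | T ∈ TriA n ∧ dlt n hn ∉ T} = TriA n \ {T | T ∈ TriA n ∧ dlt n hn ∈ T} := by
      ext T
      simp only [Set.mem_setOf_eq, Set.mem_diff]
      tauto
    rw [this, Set.ncard_diff (fun T hT => hT.1) (Set.toFinite _),
      TriA_card hn, TriA_delta_card' hn]
  · intro T₁ h₁ T₂ h₂ he
    exact (decomp_eq wOnly_singleton wOnly_singleton he).1

lemma A2_card : (A2 n hn).ncard = catalan (n - 2) := by
  unfold A2
  rw [Set.ncard_image_of_injOn, TriA_card hn]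
  intro T₁ h₁ T₂ h₂ he
  exact (decomp_eq wOnly_singleton wOnly_singleton he).1

lemma A3_card : (A3 n hn).ncard = catalan (n - 3) := by
  unfold A3
  rw [Set.ncard_image_of_injOn, TriA_delta_card' hn]
  intro T₁ h₁ T₂ h₂ he
  exact (decomp_eq wOnly_singleton wOnly_singleton he).1

lemma A4_card : (A4 n hn).ncard = catalan (n - 3) := by
  unfold A4
  rw [Set.ncard_image_of_injOn, TriA_delta_card' hn]
  intro T₁ h₁ T₂ h₂ he
  have := (decomp_eq wOnly_pair wOnly_pair he).1
  calc T₁ = insert (dlt n hn) (T₁.erase (dlt n hn)) := (Finset.insert_erase h₁.2).symm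
    _ = insert (dlt n hn) (T₂.erase (dlt n hn)) := by rw [this]
    _ = T₂ := Finset.insert_erase h₂.2

lemma disj12 : Disjoint (A1 n hn) (A2 n hn) := by
  rw [Set.disjoint_left]
  rintro F ⟨T, hT, rfl⟩ ⟨S, hS, he⟩
  beta_reduce at he
  have h1 : Sum.inr 1 ∈ toK T ∪ ({Sum.inr 0} : Finset (KVert n)) := by
    rw [← he]
    exact Finset.mem_union_right _ (Finset.mem_singleton_self _)
  rcases Finset.mem_union.1 h1 with h | h
  · exact inr_not_mem_toK h
  · rw [Finset.mem_singleton] at h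
    exact absurd h (by simp)

lemma disj13 : Disjoint (A1 n hn) (A3 n hn) := by
  rw [Set.disjoint_left]
  rintro F ⟨T, hT, rfl⟩ ⟨S, hS, he⟩
  beta_reduce at he
  have h1 : Sum.inr 2 ∈ toK T ∪ ({Sum.inr 0} : Finset (KVert n)) := by
    rw [← he]
    exact Finset.mem_union_right _ (Finset.mem_singleton_self _)
  rcases Finset.mem_union.1 h1 with h | h
  · exact inr_not_mem_toK h
  · rw [Finset.mem_singleton] at h
    exact absurd h (by simp)

lemma disj14 : Disjoint (A1 n hn) (A4 n hn) := by
  rw [Set.disjoint_left]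
  rintro F ⟨T, hT, rfl⟩ ⟨S, hS, he⟩
  beta_reduce at he
  have h1 : Sum.inr 2 ∈ toK T ∪ ({Sum.inr 0} : Finset (KVert n)) := by
    rw [← he]
    exact Finset.mem_union_right _ (by simp)
  rcases Finset.mem_union.1 h1 with h | h
  · exact inr_not_mem_toK h
  · rw [Finset.mem_singleton] at h
    exact absurd h (by simp)

lemma disj23 : Disjoint (A2 n hn) (A3 n hn) := by
  rw [Set.disjoint_left]
  rintro F ⟨T, hT, rfl⟩ ⟨S, hS, he⟩
  beta_reduce at he
  have h1 : Sum.inr 1 ∈ toK S ∪ ({Sum.inr 2} : Finset (KVert n)) := by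
    rw [he]
    exact Finset.mem_union_right _ (Finset.mem_singleton_self _)
  rcases Finset.mem_union.1 h1 with h | h
  · exact inr_not_mem_toK h
  · rw [Finset.mem_singleton] at h
    exact absurd h (by simp)

lemma disj24 : Disjoint (A2 n hn) (A4 n hn) := by
  rw [Set.disjoint_left]
  rintro F ⟨T, hT, rfl⟩ ⟨S, hS, he⟩
  beta_reduce at he
  have h1 : Sum.inr 1 ∈ toK (S.erase (dlt n hn)) ∪ ({Sum.inr 0, Sum.inr 2} : Finset (KVert n)) := by
    rw [he]
    exact Finset.mem_union_right _ (Finset.mem_singleton_self _)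
  rcases Finset.mem_union.1 h1 with h | h
  · exact inr_not_mem_toK h
  · rcases Finset.mem_insert.1 h with h | h
    · exact absurd h (by simp)
    · rw [Finset.mem_singleton] at h
      exact absurd h (by simp)

lemma disj34 : Disjoint (A3 n hn) (A4 n hn) := by
  rw [Set.disjoint_left]
  rintro F ⟨T, hT, rfl⟩ ⟨S, hS, he⟩
  beta_reduce at he
  have h1 : Sum.inr 0 ∈ toK T ∪ ({Sum.inr 2} : Finset (KVert n)) := by
    rw [← he]
    exact Finset.mem_union_right _ (by simp)
  rcases Finset.mem_union.1 h1 with h | h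
  · exact inr_not_mem_toK h
  · rw [Finset.mem_singleton] at h
    exact absurd h (by simp)

lemma maxK_card : (MaxK n hn).ncard = 2 * catalan (n - 2) + catalan (n - 3) := by
  rw [maxK_eq hn]
  have h12 : Disjoint (A1 n hn) (A2 n hn) := disj12 hn
  have h3 : Disjoint (A1 n hn ∪ A2 n hn) (A3 n hn) :=
    Set.disjoint_union_left.2 ⟨disj13 hn, disj23 hn⟩
  have h4 : Disjoint (A1 n hn ∪ A2 n hn ∪ A3 n hn) (A4 n hn) :=
    Set.disjoint_union_left.2 ⟨Set.disjoint_union_left.2 ⟨disj14 hn, disj24 hn⟩, disj34 hn⟩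
  rw [Set.ncard_union_eq h4 (Set.toFinite _) (Set.toFinite _),
    Set.ncard_union_eq h3 (Set.toFinite _) (Set.toFinite _),
    Set.ncard_union_eq h12 (Set.toFinite _) (Set.toFinite _),
    A1_card hn, A2_card hn, A3_card hn, A4_card hn]
  have hle : catalan (n - 3) ≤ catalan (n - 2) := by
    rw [← TriA_card hn, ← TriA_delta_card' hn]
    exact Set.ncard_le_ncard (fun T hT => hT.1) (Set.toFinite _)
  omega

end
end NGon


/-- For `n ≥ 5`, the number of maximal faces of `𝒦_n = st(f, 𝒜_n * S⁰)` equals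
`(2/(n-1))·binomial(2(n-2), n-2) + (1/(n-2))·binomial(2(n-3), n-3)`. -/
theorem card_maximal_faces_K (n : ℕ) (hn : 5 ≤ n) :
    {F : Finset (KVert n) | F ∈ KComplex n hn ∧
        ∀ G ∈ KComplex n hn, F ⊆ G → G = F}.ncard =
      2 * ((2 * (n - 2)).choose (n - 2) / (n - 1)) +
        (2 * (n - 3)).choose (n - 3) / (n - 2) := by
  have h1 : {F : Finset (KVert n) | F ∈ KComplex n hn ∧
      ∀ G ∈ KComplex n hn, F ⊆ G → G = F} = NGon.MaxK n hn := rfl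
  rw [h1, NGon.maxK_card hn]
  have e2 : catalan (n - 2) = (2 * (n - 2)).choose (n - 2) / (n - 1) := by
    rw [catalan_eq_centralBinom_div, Nat.centralBinom]
    congr 1
    omega
  have e3 : catalan (n - 3) = (2 * (n - 3)).choose (n - 3) / (n - 2) := by
    rw [catalan_eq_centralBinom_div, Nat.centralBinom]
    congr 1
    omega
  rw [e2, e3]
end

section
/- For n ≥ 5, the Stanley-Reisner ideal of K_n (with variables x_{ij} for diagonals, x_{1n} for w_2, y_1 for w_1, y_n for the new vertex v) is generated by the quadrics x_{ik}x_{jl} for 1 ≤ i < j < k < l ≤ n, together with x_{1(n-1)}y_1, x_{1n}y_1, x_{1n}y_n, and x_{in}y_n for 2 ≤ i ≤ n-2. -/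
open MvPolynomial

/-- The vertex set of `𝒦_n`: the diagonals of the `n`-gon together with
`w₁ = inr 0`, `w₂ = inr 1` and the subdivision vertex `v = inr 2`. -/
def KVertexSet (n : ℕ) : Set (KVert n) :=
  {w | (∃ d : Finset (Fin n), IsDiagonal n d ∧ w = Sum.inl d) ∨
    ∃ i : Fin 3, w = Sum.inr i}

lemma pair_eq' {α : Type*} [Preorder α] [DecidableEq α] {a b c d : α}
    (hab : a < b) (hcd : c < d) (h : ({a, b} : Finset α) = {c, d}) : a = c ∧ b = d := by
  have ha : a ∈ ({c, d} : Finset α) := h ▸ (by simp)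
  have hb : b ∈ ({c, d} : Finset α) := h ▸ (by simp)
  have hc : c ∈ ({a, b} : Finset α) := h.symm ▸ (by simp)
  simp only [Finset.mem_insert, Finset.mem_singleton] at ha hb hc
  rcases ha with rfl | rfl
  · rcases hb with rfl | rfl
    · exact absurd hab (lt_irrefl _)
    · exact ⟨rfl, rfl⟩
  · rcases hc with rfl | rfl
    · exact absurd hcd (lt_irrefl _)
    · exact absurd (hab.trans hcd) (lt_irrefl _)

lemma not_crosses_self {n : ℕ} (d : Finset (Fin n)) : ¬ Crosses n d d := by
  rintro ⟨i, j, k, l, hij, hjk, hkl, h | h⟩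
  · obtain ⟨rfl, -⟩ := pair_eq' (hij.trans hjk) (hjk.trans hkl) (h.1.symm.trans h.2)
    exact absurd hij (lt_irrefl _)
  · obtain ⟨rfl, -⟩ := pair_eq' (hjk.trans hkl) (hij.trans hjk) (h.1.symm.trans h.2)
    exact absurd hij (lt_irrefl _)

lemma crosses_comm {n : ℕ} {d₁ d₂ : Finset (Fin n)} (h : Crosses n d₁ d₂) : Crosses n d₂ d₁ := by
  obtain ⟨i, j, k, l, h1, h2, h3, h4 | h4⟩ := h
  · exact ⟨i, j, k, l, h1, h2, h3, Or.inr ⟨h4.2, h4.1⟩⟩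
  · exact ⟨i, j, k, l, h1, h2, h3, Or.inl ⟨h4.2, h4.1⟩⟩

lemma join_spec {n : ℕ} {h : Finset (KVert n)} (hh : h ∈ JoinC (AComplex n) (SZero n)) :
    (∀ d, Sum.inl d ∈ h → IsDiagonal n d) ∧
    (∀ d₁ d₂, Sum.inl d₁ ∈ h → Sum.inl d₂ ∈ h → ¬ Crosses n d₁ d₂) ∧
    ¬(Sum.inr 0 ∈ h ∧ Sum.inr 1 ∈ h) ∧ (Sum.inr 2 : KVert n) ∉ h := by
  obtain ⟨f, ⟨G, ⟨hGd, hGc⟩, rfl⟩, g, hg, rfl⟩ := hh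
  have hg' : g = ∅ ∨ g = {Sum.inr 0} ∨ g = {Sum.inr 1} := hg
  have hmeml : ∀ d : Finset (Fin n), Sum.inl d ∈ G.image Sum.inl ∪ g ↔ d ∈ G := by
    intro d
    rw [Finset.mem_union, Finset.mem_image]
    constructor
    · rintro (⟨x, hx, hxe⟩ | hdg)
      · cases Sum.inl_injective hxe; exact hx
      · rcases hg' with rfl | rfl | rfl <;> simp_all
    · intro hd; exact Or.inl ⟨d, hd, rfl⟩
  have hmemr : ∀ i : Fin 3, Sum.inr i ∈ G.image Sum.inl ∪ g ↔ Sum.inr i ∈ g := by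
    intro i
    rw [Finset.mem_union, Finset.mem_image]
    constructor
    · rintro (⟨x, hx, hxe⟩ | hdg)
      · exact absurd hxe (by simp)
      · exact hdg
    · exact Or.inr
  refine ⟨fun d hd => hGd d ((hmeml d).1 hd),
    fun d₁ d₂ h1 h2 => hGc d₁ ((hmeml d₁).1 h1) d₂ ((hmeml d₂).1 h2), ?_, ?_⟩
  · rintro ⟨h0, h1⟩
    rw [hmemr] at h0 h1
    rcases hg' with rfl | rfl | rfl <;> simp_all
  · intro h2
    rw [hmemr] at h2
    rcases hg' with rfl | rfl | rfl <;> simp_all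
lemma isDiag_of_between {n : ℕ} {a b c d : Fin n} (h1 : a < b) (h2 : b < c) (h3 : c < d) :
    IsDiagonal n {a, c} :=
  ⟨a, c, h1.trans h2, rfl,
    by have := Fin.lt_def.mp h1; have := Fin.lt_def.mp h2; omega,
    by have := Fin.lt_def.mp h3; have := d.isLt; omega⟩

lemma isDiag_of_between' {n : ℕ} {a b c d : Fin n} (h1 : a < b) (h2 : b < c) (h3 : c < d) :
    IsDiagonal n {b, d} :=
  ⟨b, d, h2.trans h3, rfl,
    by have := Fin.lt_def.mp h2; have := Fin.lt_def.mp h3; omega,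
    by have := Fin.lt_def.mp h1; omega⟩

lemma isDiag_delta {n : ℕ} (hn : 5 ≤ n) :
    IsDiagonal n {⟨0, by omega⟩, ⟨n - 2, by omega⟩} :=
  ⟨⟨0, by omega⟩, ⟨n - 2, by omega⟩, Fin.mk_lt_mk.mpr (by omega), rfl,
    show n - 2 ≠ 0 + 1 by omega, fun h => by have := h.2; simp at this; omega⟩

lemma isDiag_last {n : ℕ} (hn : 5 ≤ n) {i : ℕ} (h2i : 2 ≤ i) (hin : i ≤ n - 2) :
    IsDiagonal n {⟨i - 1, by have := hn; omega⟩, ⟨n - 1, by have := hn; omega⟩} :=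
  ⟨⟨i - 1, by have := hn; omega⟩, ⟨n - 1, by have := hn; omega⟩, Fin.mk_lt_mk.mpr (by omega), rfl,
    show n - 1 ≠ (i - 1) + 1 by omega, fun h => by have := h.1; simp at this; omega⟩

lemma mem_KComplex_of {n : ℕ} (hn : 5 ≤ n) (p : Finset (KVert n))
    (hsub : ↑p ⊆ KVertexSet n)
    (hA : ∀ a b c d : Fin n, a < b → b < c → c < d →
        ¬(Sum.inl ({a, c} : Finset (Fin n)) ∈ p ∧ Sum.inl ({b, d} : Finset (Fin n)) ∈ p))
    (hB : ¬(Sum.inl ({⟨0, by omega⟩, ⟨n - 2, by omega⟩} : Finset (Fin n)) ∈ p ∧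
        (Sum.inr 0 : KVert n) ∈ p))
    (hC : ¬((Sum.inr 0 : KVert n) ∈ p ∧ (Sum.inr 1 : KVert n) ∈ p))
    (hD : ¬((Sum.inr 1 : KVert n) ∈ p ∧ (Sum.inr 2 : KVert n) ∈ p))
    (hE : ∀ i : ℕ, ∀ _ : 2 ≤ i, ∀ _ : i ≤ n - 2,
        ¬(Sum.inl ({⟨i - 1, by have := hn; omega⟩, ⟨n - 1, by have := hn; omega⟩} : Finset (Fin n)) ∈ p ∧
          (Sum.inr 2 : KVert n) ∈ p)) :
    p ∈ KComplex n hn := by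
  classical
  set G : Finset (Finset (Fin n)) := p.filterMap Sum.getLeft?
    (by rintro (x | x) (y | y) b hx hy <;> simp_all [Sum.getLeft?]) with hGdef
  have hG : ∀ d : Finset (Fin n), d ∈ G ↔ Sum.inl d ∈ p := by
    intro d
    rw [hGdef, Finset.mem_filterMap]
    constructor
    · rintro ⟨(a | a), ha, hab⟩ <;> simp_all [Sum.getLeft?]
    · intro hd; exact ⟨Sum.inl d, hd, rfl⟩
  set R : Finset (KVert n) := p.filter (fun w => w.isRight) with hRdef
  have hRl : ∀ d : Finset (Fin n), Sum.inl d ∉ R := by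
    intro d hd; rw [hRdef, Finset.mem_filter] at hd; simp [Sum.isRight] at hd
  have hRr : ∀ i : Fin 3, Sum.inr i ∈ R ↔ Sum.inr i ∈ p := by
    intro i; rw [hRdef, Finset.mem_filter]; simp [Sum.isRight]
  have hpR : p = G.image Sum.inl ∪ R := by
    ext w
    rcases w with d | i
    · simp only [Finset.mem_union, Finset.mem_image]
      constructor
      · intro hw; exact Or.inl ⟨d, (hG d).2 hw, rfl⟩
      · rintro (⟨x, hx, hxe⟩ | hw)
        · cases Sum.inl_injective hxe; exact (hG d).1 hx
        · exact absurd hw (hRl d)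
    · simp only [Finset.mem_union, Finset.mem_image]
      constructor
      · intro hw; exact Or.inr ((hRr i).2 hw)
      · rintro (⟨x, hx, hxe⟩ | hw)
        · exact absurd hxe (by simp)
        · exact (hRr i).1 hw
  have hFace : IsFaceA n G := by
    constructor
    · intro d hd
      have := hsub ((hG d).1 hd)
      rcases this with ⟨d', hd', he⟩ | ⟨i, hi⟩
      · cases Sum.inl_injective he; exact hd'
      · exact absurd hi (by simp)
    · rintro d₁ hd₁ d₂ hd₂ ⟨i, j, k, l, h1, h2, h3, ⟨rfl, rfl⟩ | ⟨rfl, rfl⟩⟩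
      · exact hA i j k l h1 h2 h3 ⟨(hG _).1 hd₁, (hG _).1 hd₂⟩
      · exact hA i j k l h1 h2 h3 ⟨(hG _).1 hd₂, (hG _).1 hd₁⟩
  have hfin : ∀ i : Fin 3, i = 0 ∨ i = 1 ∨ i = 2 := by decide
  by_cases h2 : (Sum.inr 2 : KVert n) ∈ p
  · -- p uses the new vertex: stellar part
    have h1p : (Sum.inr 1 : KVert n) ∉ p := fun h1 => hD ⟨h1, h2⟩
    set δ : Finset (Fin n) := {⟨0, by omega⟩, ⟨n - 2, by omega⟩} with hδdef
    have hδlt : (⟨0, by omega⟩ : Fin n) < (⟨n - 2, by omega⟩ : Fin n) :=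
      Fin.mk_lt_mk.mpr (by omega)
    have hno : ∀ d ∈ G, ¬ Crosses n δ d := by
      rintro d hd ⟨i, j, k, l, h1, h2', h3, ⟨hδe, rfl⟩ | ⟨hδe, hde⟩⟩
      · obtain ⟨hi, hk⟩ := pair_eq' hδlt (h1.trans h2') (hδdef.symm.trans hδe)
        have hj1 : 1 ≤ (j : ℕ) := by
          have := Fin.lt_def.mp h1; rw [← hi] at this; simp at this; omega
        have hjn : (j : ℕ) < n - 2 := by
          have := Fin.lt_def.mp h2'; rw [← hk] at this; simpa using this
        have hln : (l : ℕ) = n - 1 := by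
          have := Fin.lt_def.mp h3; rw [← hk] at this; simp at this
          have := l.isLt; omega
        refine hE ((j : ℕ) + 1) (by omega) (by omega) ⟨?_, h2⟩
        have hje : (⟨(j : ℕ) + 1 - 1, by omega⟩ : Fin n) = j := by
          apply Fin.ext; simp
        have hle : (⟨n - 1, by have := hn; omega⟩ : Fin n) = l := by
          apply Fin.ext; simp [hln]
        rw [hje, hle]
        exact (hG _).1 hd
      · obtain ⟨hj, -⟩ := pair_eq' hδlt (h2'.trans h3) (hδdef.symm.trans hδe)
        have := Fin.lt_def.mp h1; rw [← hj] at this; simp at this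
    -- the face G together with δ is still non-crossing
    have hFace' : IsFaceA n (insert δ G) := by
      constructor
      · intro d hd
        rcases Finset.mem_insert.mp hd with rfl | hd
        · exact hδdef ▸ isDiag_delta hn
        · exact hFace.1 d hd
      · intro d₁ hd₁ d₂ hd₂ hcr
        rcases Finset.mem_insert.mp hd₁ with rfl | hd₁ <;>
          rcases Finset.mem_insert.mp hd₂ with rfl | hd₂
        · exact not_crosses_self _ hcr
        · exact hno d₂ hd₂ hcr
        · exact hno d₁ hd₁ (crosses_comm hcr)
        · exact hFace.2 d₁ hd₁ d₂ hd₂ hcr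
    set g₀ : Finset (KVert n) := R.erase (Sum.inr 2) with hg₀def
    have hg₀sub : g₀ ⊆ {Sum.inr 0} := by
      intro w hw
      rw [hg₀def, Finset.mem_erase] at hw
      obtain ⟨hw2, hwR⟩ := hw
      rcases w with d | i
      · exact absurd hwR (hRl d)
      · rcases hfin i with rfl | rfl | rfl
        · simp
        · exact absurd ((hRr 1).1 hwR) h1p
        · exact absurd rfl hw2
    have hg₀S : g₀ ∈ SZero n := by
      rcases Finset.subset_singleton_iff.mp hg₀sub with h | h
      · exact Or.inl h
      · exact Or.inr (Or.inl h)
    have hgJoin : G.image Sum.inl ∪ g₀ ∈ JoinC (AComplex n) (SZero n) :=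
      ⟨G.image Sum.inl, ⟨G, hFace, rfl⟩, g₀, hg₀S, rfl⟩
    have hmemg : ∀ w, w ∈ G.image Sum.inl ∪ g₀ → w ∈ p := by
      intro w hw
      rcases Finset.mem_union.mp hw with hw | hw
      · obtain ⟨d, hd, rfl⟩ := Finset.mem_image.mp hw
        exact (hG d).1 hd
      · exact Finset.mem_filter.mp (Finset.mem_of_mem_erase hw) |>.1
    have hnf : ¬ fEdge n hn ⊆ G.image Sum.inl ∪ g₀ := by
      intro hs
      refine hB ⟨?_, ?_⟩
      · exact hmemg _ (hs (by simp [fEdge, hδdef]))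
      · exact hmemg _ (hs (by simp [fEdge]))
    have hfgJoin : fEdge n hn ∪ (G.image Sum.inl ∪ g₀) ∈ JoinC (AComplex n) (SZero n) := by
      refine ⟨(insert δ G).image Sum.inl, ⟨insert δ G, hFace', rfl⟩,
        {Sum.inr 0}, Or.inr (Or.inl rfl), ?_⟩
      ext w
      simp only [fEdge, Finset.mem_union, Finset.mem_insert, Finset.mem_singleton,
        Finset.mem_image]
      constructor
      · rintro ((rfl | rfl) | (⟨d, hd, rfl⟩ | hw))
        · exact Or.inl ⟨δ, Or.inl rfl, rfl⟩
        · exact Or.inr rfl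
        · exact Or.inl ⟨d, Or.inr hd, rfl⟩
        · exact Or.inr (Finset.mem_singleton.mp (hg₀sub hw))
      · rintro (⟨d, rfl | hd, rfl⟩ | rfl)
        · exact Or.inl (Or.inl rfl)
        · exact Or.inr (Or.inl ⟨d, hd, rfl⟩)
        · exact Or.inl (Or.inr rfl)
    have hpg : p = (G.image Sum.inl ∪ g₀) ∪ {Sum.inr 2} := by
      ext w
      simp only [Finset.mem_union, Finset.mem_singleton]
      constructor
      · intro hw
        rw [hpR] at hw
        rcases Finset.mem_union.mp hw with hw' | hw'
        · exact Or.inl (Or.inl hw')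
        · by_cases hw2 : w = Sum.inr 2
          · exact Or.inr hw2
          · exact Or.inl (Or.inr (Finset.mem_erase.mpr ⟨hw2, hw'⟩))
      · rintro ((hw | hw) | rfl)
        · exact hmemg w (Finset.mem_union.mpr (Or.inl hw))
        · exact hmemg w (Finset.mem_union.mpr (Or.inr hw))
        · exact h2
    exact Or.inr ⟨G.image Sum.inl ∪ g₀, hgJoin, hnf, hfgJoin, hpg⟩
  · -- p avoids the new vertex
    have hRS : R ∈ SZero n := by
      have hRsub : ∀ w ∈ R, w = Sum.inr 0 ∨ w = Sum.inr 1 := by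
        intro w hw
        rcases w with d | i
        · exact absurd hw (hRl d)
        · rcases hfin i with rfl | rfl | rfl
          · exact Or.inl rfl
          · exact Or.inr rfl
          · exact absurd ((hRr 2).1 hw) h2
      by_cases h0 : (Sum.inr 0 : KVert n) ∈ R
      · have h1 : (Sum.inr 1 : KVert n) ∉ R := by
          intro h1; exact hC ⟨(hRr 0).1 h0, (hRr 1).1 h1⟩
        have : R ⊆ {Sum.inr 0} := by
          intro w hw
          rcases hRsub w hw with rfl | rfl
          · simp
          · exact absurd hw h1
        rcases Finset.subset_singleton_iff.mp this with h | h
        · exact Or.inl h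
        · exact Or.inr (Or.inl h)
      · have : R ⊆ {Sum.inr 1} := by
          intro w hw
          rcases hRsub w hw with rfl | rfl
          · exact absurd hw h0
          · simp
        rcases Finset.subset_singleton_iff.mp this with h | h
        · exact Or.inl h
        · exact Or.inr (Or.inr h)
    have hpJoin : p ∈ JoinC (AComplex n) (SZero n) :=
      ⟨G.image Sum.inl, ⟨G, hFace, rfl⟩, R, hRS, hpR⟩
    have hnf : ¬ fEdge n hn ⊆ p := by
      intro hs
      exact hB ⟨hs (by simp [fEdge]), hs (by simp [fEdge])⟩
    exact Or.inl ⟨hpJoin, hnf⟩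
lemma ne_AC {n : ℕ} {a b c d : Fin n} (h1 : a < b) (h2 : b < c) (h3 : c < d) :
    (Sum.inl ({a, c} : Finset (Fin n)) : KVert n) ≠ Sum.inl ({b, d} : Finset (Fin n)) := by
  intro h
  have h' := Sum.inl_injective h
  have ha : a ∈ ({b, d} : Finset (Fin n)) := h' ▸ (by simp)
  simp only [Finset.mem_insert, Finset.mem_singleton] at ha
  rcases ha with rfl | rfl
  · exact absurd h1 (lt_irrefl _)
  · exact absurd (h1.trans (h2.trans h3)) (lt_irrefl _)

lemma notK_A {n : ℕ} (hn : 5 ≤ n) {a b c d : Fin n} (h1 : a < b) (h2 : b < c) (h3 : c < d) :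
    ({Sum.inl {a, c}, Sum.inl {b, d}} : Finset (KVert n)) ∉ KComplex n hn := by
  rintro (⟨hJ, -⟩ | ⟨g, hgJ, -, -, he⟩)
  · exact (join_spec hJ).2.1 {a, c} {b, d} (by simp) (by simp)
      ⟨a, b, c, d, h1, h2, h3, Or.inl ⟨rfl, rfl⟩⟩
  · have h2m : (Sum.inr 2 : KVert n) ∈ ({Sum.inl {a, c}, Sum.inl {b, d}} : Finset (KVert n)) := by
      rw [he]; simp
    simp at h2m

lemma notK_B {n : ℕ} (hn : 5 ≤ n) : fEdge n hn ∉ KComplex n hn := by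
  rintro (⟨-, hf⟩ | ⟨g, -, -, -, he⟩)
  · exact hf subset_rfl
  · have h2m : (Sum.inr 2 : KVert n) ∈ fEdge n hn := by rw [he]; simp
    simp [fEdge] at h2m

lemma notK_C {n : ℕ} (hn : 5 ≤ n) :
    ({Sum.inr 1, Sum.inr 0} : Finset (KVert n)) ∉ KComplex n hn := by
  rintro (⟨hJ, -⟩ | ⟨g, -, -, -, he⟩)
  · exact (join_spec hJ).2.2.1 ⟨by simp, by simp⟩
  · have h2m : (Sum.inr 2 : KVert n) ∈ ({Sum.inr 1, Sum.inr 0} : Finset (KVert n)) := by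
      rw [he]; simp
    simp at h2m

lemma notK_D {n : ℕ} (hn : 5 ≤ n) :
    ({Sum.inr 1, Sum.inr 2} : Finset (KVert n)) ∉ KComplex n hn := by
  rintro (⟨hJ, -⟩ | ⟨g, hgJ, -, hfgJ, he⟩)
  · exact (join_spec hJ).2.2.2 (by simp)
  · have h1g : (Sum.inr 1 : KVert n) ∈ g := by
      have h1q : (Sum.inr 1 : KVert n) ∈ g ∪ {Sum.inr 2} := by rw [← he]; simp
      rcases Finset.mem_union.mp h1q with h | h
      · exact h
      · simp at h
    exact (join_spec hfgJ).2.2.1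
      ⟨Finset.mem_union.mpr (Or.inl (by simp [fEdge])),
        Finset.mem_union.mpr (Or.inr h1g)⟩

lemma notK_E {n : ℕ} (hn : 5 ≤ n) {i : ℕ} (h2i : 2 ≤ i) (hin : i ≤ n - 2) :
    ({Sum.inl ({⟨i - 1, by have := hn; omega⟩, ⟨n - 1, by have := hn; omega⟩} : Finset (Fin n)), Sum.inr 2} :
      Finset (KVert n)) ∉ KComplex n hn := by
  rintro (⟨hJ, -⟩ | ⟨g, hgJ, -, hfgJ, he⟩)
  · exact (join_spec hJ).2.2.2 (by simp)
  · have hdg : (Sum.inl ({⟨i - 1, by have := hn; omega⟩, ⟨n - 1, by have := hn; omega⟩} : Finset (Fin n)) : KVert n) ∈ g := by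
      have hq : (Sum.inl ({⟨i - 1, by have := hn; omega⟩, ⟨n - 1, by have := hn; omega⟩} : Finset (Fin n)) : KVert n)
          ∈ g ∪ {Sum.inr 2} := by rw [← he]; simp
      rcases Finset.mem_union.mp hq with h | h
      · exact h
      · simp at h
    refine (join_spec hfgJ).2.1 _ _
      (Finset.mem_union.mpr (Or.inl (by simp [fEdge])))
      (Finset.mem_union.mpr (Or.inr hdg))
      ⟨⟨0, by omega⟩, ⟨i - 1, by have := hn; omega⟩, ⟨n - 2, by omega⟩, ⟨n - 1, by have := hn; omega⟩,
        Fin.mk_lt_mk.mpr (by omega), Fin.mk_lt_mk.mpr (by omega),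
        Fin.mk_lt_mk.mpr (by omega), Or.inl ⟨rfl, rfl⟩⟩

lemma exists_pattern {n : ℕ} (hn : 5 ≤ n) (p : Finset (KVert n))
    (hsub : ↑p ⊆ KVertexSet n) (hnp : p ∉ KComplex n hn) :
    (∃ a b c d : Fin n, a < b ∧ b < c ∧ c < d ∧
        Sum.inl ({a, c} : Finset (Fin n)) ∈ p ∧ Sum.inl ({b, d} : Finset (Fin n)) ∈ p) ∨
    (Sum.inl ({⟨0, by omega⟩, ⟨n - 2, by omega⟩} : Finset (Fin n)) ∈ p ∧
      (Sum.inr 0 : KVert n) ∈ p) ∨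
    ((Sum.inr 0 : KVert n) ∈ p ∧ (Sum.inr 1 : KVert n) ∈ p) ∨
    ((Sum.inr 1 : KVert n) ∈ p ∧ (Sum.inr 2 : KVert n) ∈ p) ∨
    (∃ i : ℕ, ∃ _ : 2 ≤ i, ∃ _ : i ≤ n - 2,
      Sum.inl ({⟨i - 1, by have := hn; omega⟩, ⟨n - 1, by have := hn; omega⟩} : Finset (Fin n)) ∈ p ∧
        (Sum.inr 2 : KVert n) ∈ p) := by
  by_contra h
  refine hnp (mem_KComplex_of hn p hsub ?_ ?_ ?_ ?_ ?_)
  · exact fun a b c d ha hb hc hm => h (Or.inl ⟨a, b, c, d, ha, hb, hc, hm⟩)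
  · exact fun hm => h (Or.inr (Or.inl hm))
  · exact fun hm => h (Or.inr (Or.inr (Or.inl hm)))
  · exact fun hm => h (Or.inr (Or.inr (Or.inr (Or.inl hm))))
  · exact fun i hi hi' hm => h (Or.inr (Or.inr (Or.inr (Or.inr ⟨i, hi, hi', hm⟩))))
lemma pair_prod_mem_span {n : ℕ} {F : Type*} [Field F] {S : Set (MvPolynomial (KVert n) F)}
    {p : Finset (KVert n)} {u v : KVert n} (huv : u ≠ v) (hu : u ∈ p) (hv : v ∈ p)
    (hgen : (X u * X v : MvPolynomial (KVert n) F) ∈ S) :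
    (∏ w ∈ p, (X w : MvPolynomial (KVert n) F)) ∈ Ideal.span S := by
  have hqp : ({u, v} : Finset (KVert n)) ⊆ p :=
    Finset.insert_subset_iff.mpr ⟨hu, Finset.singleton_subset_iff.mpr hv⟩
  rw [← Finset.prod_sdiff hqp, Finset.prod_pair huv]
  exact Ideal.mul_mem_left _ _ (Ideal.subset_span hgen)

lemma pair_gen_mem_span {n : ℕ} (hn : 5 ≤ n) {F : Type*} [Field F] {u v : KVert n}
    (huv : u ≠ v) (hu : u ∈ KVertexSet n) (hv : v ∈ KVertexSet n)
    (hnot : ({u, v} : Finset (KVert n)) ∉ KComplex n hn) :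
    (X u * X v : MvPolynomial (KVert n) F) ∈ Ideal.span
      ((fun p : Finset (KVert n) => ∏ w ∈ p, (X w : MvPolynomial (KVert n) F)) ''
        {p | ↑p ⊆ KVertexSet n ∧ p ∉ KComplex n hn}) := by
  refine Ideal.subset_span ⟨{u, v}, ⟨?_, hnot⟩, Finset.prod_pair huv⟩
  intro w hw
  simp only [Finset.coe_insert, Finset.coe_singleton, Set.mem_insert_iff,
    Set.mem_singleton_iff] at hw
  rcases hw with rfl | rfl
  · exact hu
  · exact hv

/-- For `n ≥ 5`, the Stanley–Reisner ideal of `𝒦_n` — generated by the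
monomials of the non-faces of `𝒦_n` — is generated by the quadrics
`x_{ik}x_{jl}` for `1 ≤ i < j < k < l ≤ n` together with
`x_{1(n-1)}y₁`, `x_{1n}y₁`, `x_{1n}y_n` and `x_{in}y_n` for `2 ≤ i ≤ n-2`.
Here the variable of a diagonal `δ_{ij}` is `X (inl {i, j})` (vertices of the
`n`-gon labeled `1, …, n` corresponding to `0, …, n-1` in `Fin n`), and
`y₁ = X (inr 0)` is the variable of `w₁`, `x_{1n} = X (inr 1)` that of `w₂`,
and `y_n = X (inr 2)` that of the new vertex `v`. -/
theorem stanleyReisner_ideal_K (n : ℕ) (hn : 5 ≤ n) (F : Type*) [Field F] :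
    Ideal.span ((fun p : Finset (KVert n) =>
        ∏ w ∈ p, (X w : MvPolynomial (KVert n) F)) ''
        {p | ↑p ⊆ KVertexSet n ∧ p ∉ KComplex n hn}) =
      Ideal.span
        ({q : MvPolynomial (KVert n) F | ∃ a b c d : Fin n,
            a < b ∧ b < c ∧ c < d ∧
            q = X (Sum.inl ({a, c} : Finset (Fin n))) *
              X (Sum.inl ({b, d} : Finset (Fin n)))} ∪
          {X (Sum.inl ({⟨0, by omega⟩, ⟨n - 2, by omega⟩} : Finset (Fin n))) *
              X (Sum.inr 0),
            X (Sum.inr 1) * X (Sum.inr 0),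
            X (Sum.inr 1) * X (Sum.inr 2)} ∪
          {q : MvPolynomial (KVert n) F | ∃ i : ℕ, ∃ _ : 2 ≤ i,
            ∃ _ : i ≤ n - 2,
            q = X (Sum.inl ({⟨i - 1, by omega⟩, ⟨n - 1, by omega⟩} :
                Finset (Fin n))) * X (Sum.inr 2)}) := by
  apply le_antisymm
  · rw [Ideal.span_le]
    rintro x ⟨p, ⟨hsub, hnp⟩, rfl⟩
    rw [SetLike.mem_coe]
    show (∏ w ∈ p, (X w : MvPolynomial (KVert n) F)) ∈ _
    rcases exists_pattern hn p hsub hnp with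
      ⟨a, b, c, d, h1, h2, h3, m1, m2⟩ | ⟨m1, m2⟩ | ⟨m1, m2⟩ | ⟨m1, m2⟩ |
        ⟨i, hi, hi', m1, m2⟩
    · exact pair_prod_mem_span (ne_AC h1 h2 h3) m1 m2
        (Or.inl (Or.inl ⟨a, b, c, d, h1, h2, h3, rfl⟩))
    · exact pair_prod_mem_span (by simp) m1 m2 (Or.inl (Or.inr (Or.inl rfl)))
    · exact pair_prod_mem_span (by simp) m2 m1 (Or.inl (Or.inr (Or.inr (Or.inl rfl))))
    · exact pair_prod_mem_span (by simp) m1 m2 (Or.inl (Or.inr (Or.inr (Or.inr rfl))))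
    · exact pair_prod_mem_span (by simp) m1 m2 (Or.inr ⟨i, hi, hi', rfl⟩)
  · rw [Ideal.span_le]
    rintro q hq
    rw [SetLike.mem_coe]
    simp only [Set.mem_union, Set.mem_setOf_eq, Set.mem_insert_iff,
      Set.mem_singleton_iff] at hq
    rcases hq with (⟨a, b, c, d, h1, h2, h3, rfl⟩ | hq) | ⟨i, hi, hi', rfl⟩
    · exact pair_gen_mem_span hn (ne_AC h1 h2 h3)
        (Or.inl ⟨_, isDiag_of_between h1 h2 h3, rfl⟩)
        (Or.inl ⟨_, isDiag_of_between' h1 h2 h3, rfl⟩)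
        (notK_A hn h1 h2 h3)
    · rcases hq with rfl | rfl | rfl
      · exact pair_gen_mem_span hn (by simp)
          (Or.inl ⟨_, isDiag_delta hn, rfl⟩) (Or.inr ⟨0, rfl⟩) (notK_B hn)
      · exact pair_gen_mem_span hn (by simp)
          (Or.inr ⟨1, rfl⟩) (Or.inr ⟨0, rfl⟩) (notK_C hn)
      · exact pair_gen_mem_span hn (by simp)
          (Or.inr ⟨1, rfl⟩) (Or.inr ⟨2, rfl⟩) (notK_D hn)
    · exact pair_gen_mem_span hn (by simp)
        (Or.inl ⟨_, isDiag_last hn hi hi', rfl⟩) (Or.inr ⟨2, rfl⟩)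
        (notK_E hn hi hi')
end

section
/- For 2 ≤ j ≤ n-2, the identity y_1(x_{1j}x_{(n-1)n} + x_{1n}x_{j(n-1)}) - x_{jn}(f_{n-1} - x_{(n-1)1}y_1) = -Σ_{r=2}^{j-1} y_r Φ_{rj(n-1)n} + Σ_{r=j+1}^{n-2} y_r Φ_{jr(n-1)n} - x_{(n-1)n}f_j - x_{j(n-1)}f_n holds in the polynomial ring. -/
open MvPolynomial Finset

lemma xv_skew (K : Type*) [CommRing K] (a b : ℕ) : xv K a b = -xv K b a := by
  unfold xv
  rcases lt_trichotomy a b with h | h | h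
  · simp [h, lt_asymm h]
  · simp [h]
  · simp [h, lt_asymm h]

lemma sum_split {M : Type*} [AddCommMonoid M] (n j : ℕ) (h2 : 2 ≤ j) (hjn : j ≤ n - 2)
    (f : ℕ → M) :
    ∑ r ∈ Finset.Icc 1 n, f r =
      f 1 + ∑ r ∈ Finset.Icc 2 (j-1), f r + f j + ∑ r ∈ Finset.Icc (j+1) (n-2), f r
        + f (n-1) + f n := by
  have h4 : 4 ≤ n := by omega
  have e1 : Finset.Icc 1 n = Finset.Ioc 0 n := by rw [← Finset.Icc_add_one_left_eq_Ioc]; rfl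
  have e2 : Finset.Icc 2 (j-1) = Finset.Ioc 1 (j-1) := by rw [← Finset.Icc_add_one_left_eq_Ioc]; rfl
  have e3 : Finset.Icc (j+1) (n-2) = Finset.Ioc j (n-2) := by rw [← Finset.Icc_add_one_left_eq_Ioc]
  have s1 : Finset.Ioc 0 1 = {1} := by
    ext x; simp only [Finset.mem_Ioc, Finset.mem_singleton]; omega
  have s2 : Finset.Ioc (j-1) j = {j} := by
    ext x; simp only [Finset.mem_Ioc, Finset.mem_singleton]; omega
  have s3 : Finset.Ioc (n-2) (n-1) = {n-1} := by
    ext x; simp only [Finset.mem_Ioc, Finset.mem_singleton]; omega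
  have s4 : Finset.Ioc (n-1) n = {n} := by
    ext x; simp only [Finset.mem_Ioc, Finset.mem_singleton]; omega
  rw [e1, e2, e3,
    ← Finset.sum_Ioc_consecutive f (show (0:ℕ) ≤ n-1 by omega) (show n-1 ≤ n by omega),
    ← Finset.sum_Ioc_consecutive f (show (0:ℕ) ≤ n-2 by omega) (show n-2 ≤ n-1 by omega),
    ← Finset.sum_Ioc_consecutive f (show (0:ℕ) ≤ j by omega) (show j ≤ n-2 by omega),
    ← Finset.sum_Ioc_consecutive f (show (0:ℕ) ≤ j-1 by omega) (show j-1 ≤ j by omega),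
    ← Finset.sum_Ioc_consecutive f (show (0:ℕ) ≤ 1 by omega) (show 1 ≤ j-1 by omega),
    s1, s2, s3, s4, Finset.sum_singleton, Finset.sum_singleton, Finset.sum_singleton,
    Finset.sum_singleton]

/-- For `2 ≤ j ≤ n-2`:
`y_1(x_{1j}x_{(n-1)n} + x_{1n}x_{j(n-1)}) - x_{jn}(f_{n-1} - x_{(n-1)1}y_1)
 = -Σ_{r=2}^{j-1} y_r Φ_{rj(n-1)n} + Σ_{r=j+1}^{n-2} y_r Φ_{jr(n-1)n}
   - x_{(n-1)n}f_j - x_{j(n-1)}f_n`. -/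
theorem spoly_fnm1_Phi (K : Type*) [CommRing K] (n j : ℕ)
    (h2 : 2 ≤ j) (hjn : j ≤ n - 2) :
    yv K 1 * (xv K 1 j * xv K (n - 1) n + xv K 1 n * xv K j (n - 1))
      - xv K j n * (fpoly K n (n - 1) - xv K (n - 1) 1 * yv K 1) =
      -∑ r ∈ Finset.Icc 2 (j - 1), yv K r * Phi K r j (n - 1) n
      + ∑ r ∈ Finset.Icc (j + 1) (n - 2), yv K r * Phi K j r (n - 1) n
      - xv K (n - 1) n * fpoly K n j - xv K j (n - 1) * fpoly K n n := by
  set D : ℕ → MvPolynomial ((ℕ × ℕ) ⊕ ℕ) K := fun r =>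
    xv K (n-1) n * (xv K j r * yv K r) + xv K j (n-1) * (xv K n r * yv K r)
      - xv K j n * (xv K (n-1) r * yv K r) with hDdef
  have hD : ∀ r, D r = -(yv K r * Phi K r j (n-1) n) := by
    intro r
    rw [hDdef]
    simp only [Phi]
    rw [xv_skew K j r, xv_skew K n r, xv_skew K (n-1) r]
    ring
  have hD' : ∀ r, D r = yv K r * Phi K j r (n-1) n := by
    intro r
    rw [hDdef]
    simp only [Phi]
    rw [xv_skew K n r, xv_skew K (n-1) r]
    ring
  have hDj : D j = 0 := by
    rw [hD j]
    simp only [Phi, xv_diag]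
    ring
  have hDn1 : D (n-1) = 0 := by
    rw [hD (n-1)]
    simp only [Phi, xv_diag]
    rw [xv_skew K (n-1) j]
    ring
  have hDn : D n = 0 := by
    rw [hD n]
    simp only [Phi, xv_diag]
    rw [xv_skew K n j, xv_skew K n (n-1)]
    ring
  have key : xv K (n-1) n * fpoly K n j + xv K j (n-1) * fpoly K n n
      - xv K j n * fpoly K n (n-1) = ∑ r ∈ Finset.Icc 1 n, D r := by
    simp only [hDdef, fpoly, Finset.mul_sum, ← Finset.sum_add_distrib,
      ← Finset.sum_sub_distrib]
  have hsum : ∑ r ∈ Finset.Icc 1 n, D r =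
      D 1 + ∑ r ∈ Finset.Icc 2 (j-1), D r + D j + ∑ r ∈ Finset.Icc (j+1) (n-2), D r
        + D (n-1) + D n := sum_split n j h2 hjn D
  have hS1 : ∑ r ∈ Finset.Icc 2 (j-1), D r =
      -∑ r ∈ Finset.Icc 2 (j-1), yv K r * Phi K r j (n-1) n := by
    rw [← Finset.sum_neg_distrib]
    exact Finset.sum_congr rfl fun r _ => hD r
  have hS2 : ∑ r ∈ Finset.Icc (j+1) (n-2), D r =
      ∑ r ∈ Finset.Icc (j+1) (n-2), yv K r * Phi K j r (n-1) n :=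
    Finset.sum_congr rfl fun r _ => hD' r
  have hD1 : D 1 = -(yv K 1 * Phi K 1 j (n-1) n) := hD 1
  rw [hS1, hS2, hDj, hDn1, hDn, hD1] at hsum
  have hPhi1 : Phi K 1 j (n-1) n =
      xv K 1 j * xv K (n-1) n - xv K 1 (n-1) * xv K j n + xv K 1 n * xv K j (n-1) := rfl
  have hsk : xv K (n-1) 1 = -xv K 1 (n-1) := xv_skew K (n-1) 1
  linear_combination key + hsum - yv K 1 * hPhi1 + yv K 1 * xv K j n * hsk
end
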